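/- arXiv:2208.09380 — 9 statements merged into one kernel-verified Lean document; each statement's English description precedes it below -/
import Mathlib

section
/- Let ⟨f_β : β < α⟩ be a <*-increasing sequence in ∏_{i<λ} μ_i with cf(α) > λ, and suppose A ⊆ α witnesses goodness of α. Then the pointwise supremum f_A is an exact upper bound of ⟨f_β : β ∈ A⟩: it is a <*-upper bound, and every g <* f_A satisfies g <* f_β for some β < α. -/
open Cardinal Set

/-- The set of ordinals `A` has order type `ξ`: it is the image of `ξ` under a
strictly monotone map. -/
def HasOtype (A : Set Ordinal) (ξ : Ordinal) : Prop :=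
  ∃ e : Ordinal → Ordinal, StrictMonoOn e (Set.Iio ξ) ∧ A = e '' Set.Iio ξ

/-- `α` is a limit point of the set of ordinals `C`. -/
def IsLimPt (C : Set Ordinal) (α : Ordinal) : Prop :=
  0 < α ∧ ∀ β < α, ∃ γ ∈ C, β < γ ∧ γ < α

/-- `A` is an unbounded subset of `α`. -/
def Unbdd (A : Set Ordinal) (α : Ordinal) : Prop :=
  A ⊆ Set.Iio α ∧ ∀ β < α, ∃ γ ∈ A, β < γ

/-- `C` is a club (closed unbounded) subset of `κ`. -/
def IsClubOrd (C : Set Ordinal) (κ : Ordinal) : Prop :=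
  C ⊆ Set.Iio κ ∧ (∀ α < κ, IsLimPt C α → α ∈ C) ∧ ∀ β < κ, ∃ γ ∈ C, β < γ

/-- `S` is a stationary subset of `κ`. -/
def IsStat (S : Set Ordinal) (κ : Ordinal) : Prop :=
  ∀ C, IsClubOrd C κ → (S ∩ C).Nonempty

/-- `f <* g` : eventual pointwise domination below `lam`. -/
def evLT (lam : Ordinal) (f g : Ordinal → Ordinal) : Prop :=
  ∃ j < lam, ∀ i, j ≤ i → i < lam → f i < g i

/-- `A` witnesses goodness of `α` for the sequence `f`. -/
def GoodWit (lam α : Ordinal) (f : Ordinal → Ordinal → Ordinal) (A : Set Ordinal) : Prop :=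
  Unbdd A α ∧ HasOtype A α.cof.ord ∧
    ∃ j < lam, ∀ i, j ≤ i → i < lam → ∀ β ∈ A, ∀ γ ∈ A, β < γ → f β i < f γ i

/-- The pointwise supremum `f_A`. -/
noncomputable def ptSup (f : Ordinal → Ordinal → Ordinal) (A : Set Ordinal) (i : Ordinal) :
    Ordinal := sSup ((fun β => f β i) '' A)

/-! The upper bound property holds because `A` is cofinal in `α` and the sequence is
`<*`-increasing. For exactness, if `g <* f_A` then for each `i < λ` on a tail some `β_i ∈ A`
has `g i < f_{β_i} i`; as `λ < cf α`, all `β_i` lie below a single `γ ∈ A`, and goodness of `A`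
gives `f_{β_i} i < f_γ i` on a common tail. -/

theorem Unbdd.nonempty {A : Set Ordinal} {α : Ordinal} (hA : Unbdd A α) (hα : α ≠ 0) :
    A.Nonempty :=
  let ⟨γ, hγ, _⟩ := hA.2 0 (pos_iff_ne_zero.2 hα)
  ⟨γ, hγ⟩

theorem Unbdd.exists_forall_lt_of_lt_cof {A : Set Ordinal.{u}} {α : Ordinal.{u}}
    {lam : Cardinal.{u}} (hA : Unbdd A α) (hlam : lam < α.cof) {P : Ordinal → Ordinal → Prop}
    (hP : ∀ i < lam.ord, ∃ β ∈ A, P i β) :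
    ∃ γ ∈ A, ∀ i < lam.ord, ∃ β ∈ A, β < γ ∧ P i β := by
  choose F hFA hFP using hP
  have hsup : ⨆ i : Iio lam.ord, F i i.2 < α := by
    refine Ordinal.lift_iSup_lt_of_lt_cof ?_ fun i => hA.1 (hFA i i.2)
    rw [Cardinal.mk_Iio_ordinal, Cardinal.card_ord, Cardinal.lift_lift, ← Ordinal.lift_cof,
      Cardinal.lift_lt]
    exact hlam
  obtain ⟨γ, hγA, hγ⟩ := hA.2 _ hsup
  refine ⟨γ, hγA, fun i hi => ⟨F i hi, hFA i hi, ?_, hFP i hi⟩⟩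
  exact (le_ciSup Ordinal.bddAbove_of_small (⟨i, hi⟩ : Iio lam.ord)).trans_lt hγ

theorem exists_lt_of_lt_ptSup {f : Ordinal → Ordinal → Ordinal} {A : Set Ordinal}
    {i x : Ordinal} (h : x < ptSup f A i) : ∃ β ∈ A, x < f β i := by
  have hne : ((fun β => f β i) '' A).Nonempty := by
    by_contra hne
    simp [ptSup, not_nonempty_iff_eq_empty.1 hne] at h
  obtain ⟨_, ⟨β, hβ, rfl⟩, hlt⟩ := exists_lt_of_lt_csSup hne h
  exact ⟨β, hβ, hlt⟩

theorem evLT_ptSup {lam α β : Ordinal} {f : Ordinal → Ordinal → Ordinal} {A : Set Ordinal}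
    (hA : Unbdd A α) (hbdd : ∀ i < lam, BddAbove ((fun β => f β i) '' A))
    (hinc : ∀ β γ, β < γ → γ < α → evLT lam (f β) (f γ)) (hβ : β < α) :
    evLT lam (f β) (ptSup f A) := by
  obtain ⟨γ, hγA, hβγ⟩ := hA.2 β hβ
  obtain ⟨j, hj, hlt⟩ := hinc β γ hβγ (hA.1 hγA)
  exact ⟨j, hj, fun i hji hi => (hlt i hji hi).trans_le (le_csSup (hbdd i hi) ⟨γ, hγA, rfl⟩)⟩

theorem GoodWit.exists_evLT_of_evLT_ptSup {lam : Cardinal} {α : Ordinal}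
    {f : Ordinal → Ordinal → Ordinal} {A : Set Ordinal} (hA : GoodWit lam.ord α f A)
    (hcof : lam < α.cof) {g : Ordinal → Ordinal} (hg : evLT lam.ord g (ptSup f A)) :
    ∃ β < α, evLT lam.ord g (f β) := by
  obtain ⟨hAunb, -, j₁, hj₁, hgood⟩ := hA
  obtain ⟨j₀, hj₀, hg⟩ := hg
  have hα : α ≠ 0 := by
    rintro rfl
    simp at hcof
  obtain ⟨β₀, hβ₀⟩ := hAunb.nonempty hα
  obtain ⟨γ, hγA, hγ⟩ := hAunb.exists_forall_lt_of_lt_cof hcof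
    (P := fun i β => max j₀ j₁ ≤ i → g i < f β i) fun i hi => by
      by_cases hJ : max j₀ j₁ ≤ i
      · obtain ⟨β, hβA, hgβ⟩ := exists_lt_of_lt_ptSup (hg i (le_of_max_le_left hJ) hi)
        exact ⟨β, hβA, fun _ => hgβ⟩
      · exact ⟨β₀, hβ₀, fun h => absurd h hJ⟩
  refine ⟨γ, hAunb.1 hγA, max j₀ j₁, max_lt hj₀ hj₁, fun i hJ hi => ?_⟩
  obtain ⟨β, hβA, hβγ, hgβ⟩ := hγ i hi
  exact (hgβ hJ).trans (hgood i (le_of_max_le_right hJ) hi β hβA γ hγA hβγ)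

theorem stmt_5_general (lam : Cardinal)
    (μ : Ordinal → Cardinal)
    (α : Ordinal) (hcofα : lam < α.cof)
    (f : Ordinal → Ordinal → Ordinal)
    (hprod : ∀ β < α, ∀ i < lam.ord, f β i < (μ i).ord)
    (hinc : ∀ β γ, β < γ → γ < α → evLT lam.ord (f β) (f γ))
    (A : Set Ordinal) (hA : GoodWit lam.ord α f A) :
    (∀ β < α, evLT lam.ord (f β) (ptSup f A)) ∧
      ∀ g : Ordinal → Ordinal, evLT lam.ord g (ptSup f A) →
        ∃ β < α, evLT lam.ord g (f β) := by
  -- `sSup` of an unbounded set of ordinals is a junk value; the bounds `μ i` rule that out.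
  have hbdd : ∀ i < lam.ord, BddAbove ((fun β => f β i) '' A) := fun i hi =>
    ⟨(μ i).ord, forall_mem_image.2 fun β hβ => (hprod β (hA.1.1 hβ) i hi).le⟩
  exact ⟨fun _ hβ => evLT_ptSup hA.1 hbdd hinc hβ,
    fun _ hg => hA.exists_evLT_of_evLT_ptSup hcofα hg⟩

/-- the pointwise supremum over a set witnessing goodness is an exact upper bound. -/
theorem stmt_5 (lam : Cardinal) (hlam : lam.IsRegular) (hω : ℵ₀ < lam)
    (μ : Ordinal → Cardinal) (hμreg : ∀ i < lam.ord, (μ i).IsRegular)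
    (α : Ordinal) (hcofα : lam < α.cof)
    (f : Ordinal → Ordinal → Ordinal)
    (hprod : ∀ β < α, ∀ i < lam.ord, f β i < (μ i).ord)
    (hinc : ∀ β γ, β < γ → γ < α → evLT lam.ord (f β) (f γ))
    (A : Set Ordinal) (hA : GoodWit lam.ord α f A) :
    (∀ β < α, evLT lam.ord (f β) (ptSup f A)) ∧
      ∀ g : Ordinal → Ordinal, evLT lam.ord g (ptSup f A) →
        ∃ β < α, evLT lam.ord g (f β) :=
  stmt_5_general lam μ α hcofα f hprod hinc A hA
end

section
/- Let ⟨f_β : β < α⟩ be a <*-increasing sequence in ∏_{i<λ} μ_i with cf(α) ≤ λ. Then ⟨f_β : β < α⟩ has no exact upper bound: for any upper bound f, there is g <* f such that g is not eventually dominated by any f_β with β < α. -/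
/-! Using `κ ≃ κ × κ` for `κ = λ.ord`, split `κ` into `λ` pieces, each cofinal in `κ`, and label
them by a cofinal subset of `α` of size `cf α ≤ λ`. This yields `b : κ → α` whose values are
cofinal in `α` and each taken on a cofinal set of indices. The diagonal function `g i = f (b i) i`
(replaced by `0` where it is not below `fub`) is then eventually below `fub`, but it is not
eventually below any `f β`: pick a value `γ > β` of `b`; on the cofinal fibre `b⁻¹{γ}`,
`g = f γ > f β` from some point on. -/

open Cardinal Set

open Filter Function Order

universe u v

section Partition

variable {T : Type u} [LinearOrder T]

theorem exists_forall_frequently_atTop_eq [Infinite T] (hsmall : ∀ t : T, #(Iio t) < #T)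
    {ι : Type v} [Nonempty ι] (hι : lift.{u} #ι ≤ lift.{v} #T) :
    ∃ c : T → ι, ∀ x, ∃ᶠ i in atTop, c i = x := by
  obtain ⟨e⟩ : Nonempty (T ≃ T × T) := by
    rw [← Cardinal.eq, mk_prod, lift_id, mul_eq_self (aleph0_le_mk T)]
  obtain ⟨emb⟩ := lift_mk_le'.1 hι
  refine ⟨fun i => invFun emb (e i).1, fun x => frequently_atTop.2 fun a => ?_⟩
  -- otherwise the fibre over `x`, containing all `e.symm (emb x, y)`, would lie in `Iio a`
  by_contra! hfiber
  have hlt : ∀ y, e.symm (emb x, y) < a := fun y => by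
    by_contra! hle
    exact hfiber _ hle (by simp [leftInverse_invFun emb.injective x])
  have hinj : Injective fun y => (⟨e.symm (emb x, y), hlt y⟩ : Iio a) := fun y y' h => by
    simpa using congrArg Subtype.val h
  exact (hsmall a).not_ge (mk_le_of_injective hinj)

theorem exists_forall_exists_le_frequently_atTop_eq [Infinite T]
    (hsmall : ∀ t : T, #(Iio t) < #T) {A : Type v} [LinearOrder A] [Nonempty A]
    (hA : lift.{u} (Order.cof A) ≤ lift.{v} #T) :
    ∃ b : T → A, ∀ a, ∃ a', a ≤ a' ∧ ∃ᶠ i in atTop, b i = a' := by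
  obtain ⟨s, hs, hcard⟩ := Order.exists_cof_eq A
  obtain ⟨y₀, hy₀, -⟩ := hs (Classical.arbitrary A)
  have : Nonempty s := ⟨⟨y₀, hy₀⟩⟩
  obtain ⟨c, hc⟩ := exists_forall_frequently_atTop_eq hsmall (ι := s) (hcard ▸ hA)
  refine ⟨fun i => c i, fun a => ?_⟩
  obtain ⟨y, hy, hay⟩ := hs a
  exact ⟨y, hay, (hc ⟨y, hy⟩).mono fun i hi => congrArg Subtype.val hi⟩

end Partition

theorem evLT_iff_eventually_atTop {κ : Ordinal} (hκ : 0 < κ) {f g : Ordinal → Ordinal} :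
    evLT κ f g ↔ ∀ᶠ i : Iio κ in atTop, f i < g i := by
  have : Nonempty (Iio κ) := ⟨⟨0, hκ⟩⟩
  rw [eventually_atTop]
  constructor
  · rintro ⟨j, hj, h⟩
    exact ⟨⟨j, hj⟩, fun i hi => h i hi i.2⟩
  · rintro ⟨j, h⟩
    exact ⟨j, j.2, fun i hji hi => h ⟨i, hi⟩ hji⟩

theorem Cardinal.mk_Iio_lt_mk_Iio_ord (c : Cardinal.{u}) (t : Iio c.ord) :
    #(Iio t) < #(Iio c.ord) := by
  have hinj : Injective fun s : Iio t => (⟨s.1.1, s.2⟩ : Iio t.1) := fun s s' h => by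
    simpa [Subtype.ext_iff] using h
  refine (mk_le_of_injective hinj).trans_lt ?_
  rw [Cardinal.mk_Iio_ordinal, Cardinal.mk_Iio_ordinal, card_ord, lift_lt]
  exact Cardinal.lt_ord.1 t.2

theorem exists_forall_lt_frequently_atTop_eq {lam : Cardinal.{u}} (hlam : ℵ₀ ≤ lam)
    {α : Ordinal.{u}} (hα : IsSuccLimit α) (hcof : α.cof ≤ lam) :
    ∃ b : Ordinal → Ordinal, ∀ β < α, ∃ γ, β < γ ∧ γ < α ∧
      ∃ᶠ i : Iio lam.ord in atTop, b i = γ := by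
  have : Infinite (Iio lam.ord) := by
    simpa [Cardinal.infinite_iff] using hlam
  have : Nonempty (Iio α) := ⟨⟨0, hα.pos⟩⟩
  obtain ⟨b, hb⟩ := exists_forall_exists_le_frequently_atTop_eq
    (Cardinal.mk_Iio_lt_mk_Iio_ord lam) (A := Iio α)
    (by simpa [Ordinal.cof_Iio, ← Ordinal.lift_cof] using hcof)
  refine ⟨fun i => if h : i < lam.ord then b ⟨i, h⟩ else 0, fun β hβ => ?_⟩
  obtain ⟨γ, hβγ, hγ⟩ := hb ⟨succ β, hα.succ_lt hβ⟩
  exact ⟨γ, succ_le_iff.1 hβγ, γ.2, hγ.mono fun i hi => by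
    simp [mem_Iio.1 i.2, hi]⟩

theorem exists_evLT_forall_not_evLT {κ α : Ordinal} (hκ : 0 < κ) (hα : 0 < α)
    {f : Ordinal → Ordinal → Ordinal} {fub : Ordinal → Ordinal}
    (hinc : ∀ β γ, β < γ → γ < α → evLT κ (f β) (f γ)) (hub : ∀ β < α, evLT κ (f β) fub)
    {b : Ordinal → Ordinal}
    (hb : ∀ β < α, ∃ γ, β < γ ∧ γ < α ∧ ∃ᶠ i : Iio κ in atTop, b i = γ) :
    ∃ g, evLT κ g fub ∧ ∀ β < α, ¬ evLT κ g (f β) := by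
  simp only [evLT_iff_eventually_atTop hκ] at hinc hub ⊢
  refine ⟨fun i => if f (b i) i < fub i then f (b i) i else 0, ?_, fun β hβ hg => ?_⟩
  · filter_upwards [hub 0 hα] with i hi
    split_ifs with h
    exacts [h, pos_of_gt hi]
  · obtain ⟨γ, hβγ, hγα, hfreq⟩ := hb β hβ
    obtain ⟨i, hbi, hβγi, hγi, hgi⟩ :=
      (hfreq.and_eventually ((hinc β γ hβγ hγα).and ((hub γ hγα).and hg))).exists
    simp only [hbi, if_pos hγi] at hgi
    exact hgi.not_gt hβγi

theorem stmt_6_general (lam : Cardinal) (hω : ℵ₀ < lam)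
    (α : Ordinal) (hα : Order.IsSuccLimit α) (hcofα : α.cof ≤ lam)
    (f : Ordinal → Ordinal → Ordinal)
    (hinc : ∀ β γ, β < γ → γ < α → evLT lam.ord (f β) (f γ)) :
    ∀ fub : Ordinal → Ordinal, (∀ β < α, evLT lam.ord (f β) fub) →
      ∃ g : Ordinal → Ordinal, evLT lam.ord g fub ∧
        ∀ β < α, ¬ evLT lam.ord g (f β) := by
  intro fub hub
  obtain ⟨b, hb⟩ := exists_forall_lt_frequently_atTop_eq hω.le hα hcofα
  exact exists_evLT_forall_not_evLT (Cardinal.isSuccLimit_ord hω.le).pos hα.pos hinc hub hb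

/-- a `<*`-increasing sequence of length of cofinality `≤ λ` has no exact upper bound. -/
theorem stmt_6 (lam : Cardinal) (hlam : lam.IsRegular) (hω : ℵ₀ < lam)
    (μ : Ordinal → Cardinal) (hμreg : ∀ i < lam.ord, (μ i).IsRegular)
    (α : Ordinal) (hα : Order.IsSuccLimit α) (hcofα : α.cof ≤ lam)
    (f : Ordinal → Ordinal → Ordinal)
    (hprod : ∀ β < α, ∀ i < lam.ord, f β i < (μ i).ord)
    (hinc : ∀ β γ, β < γ → γ < α → evLT lam.ord (f β) (f γ)) :
    ∀ fub : Ordinal → Ordinal, (∀ β < α, evLT lam.ord (f β) fub) →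
      ∃ g : Ordinal → Ordinal, evLT lam.ord g fub ∧
        ∀ β < α, ¬ evLT lam.ord g (f β) :=
  stmt_6_general lam hω α hα hcofα f hinc
end

section
/- Let ⟨f_β : β < α⟩ be a <*-increasing sequence in ∏_{i<λ} μ_i with cf(α) > λ. If A and B both witness goodness of α, then f_A =* f_B, i.e., there is j < λ such that f_A(i) = f_B(i) for all i ≥ j. -/
open Cardinal Set

/-!
For `γ ∈ B` pick `β ∈ A` above `γ` and a threshold `j_γ < λ` beyond which `f_γ < f_β`. As
`cf α > λ`, a single `j` bounds `j_γ` for unboundedly many `γ ∈ B`; since `B` is good, every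
`f_γ` with `γ ∈ B` then lies below some `f_β` with `β ∈ A` at every coordinate past `j` and the
goodness threshold of `B`. By symmetry `f_A` and `f_B` eventually dominate each other.
-/

universe u v

theorem exists_lt_forall_exists_le_of_lt_cof {α κ : Ordinal.{u}} (hκ : κ.card < α.cof)
    {B : Set Ordinal.{u}} (hB : ∀ c < α, ∃ γ ∈ B, c < γ) (J : Ordinal.{u} → Ordinal.{u})
    (hJ : ∀ γ ∈ B, J γ < κ) : ∃ j < κ, ∀ c < α, ∃ γ ∈ B, c < γ ∧ J γ ≤ j := by
  by_contra! h
  choose c hcα hc using h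
  have hsup : ⨆ j : Iio κ, c j j.2 < α := by
    apply Ordinal.lift_iSup_lt_of_lt_cof _ fun j : Iio κ => hcα j j.2
    simpa [Cardinal.mk_Iio_ordinal, ← Ordinal.lift_card, ← Ordinal.lift_cof] using hκ
  obtain ⟨γ, hγB, hγ⟩ := hB _ hsup
  have hle : c (J γ) (hJ γ hγB) ≤ ⨆ j : Iio κ, c j j.2 :=
    Ordinal.le_iSup (fun j : Iio κ => c j j.2) ⟨J γ, hJ γ hγB⟩
  exact (hc _ _ γ hγB (hle.trans_lt hγ)).false

theorem GoodWit.eventually_forall_exists_lt {κ α : Ordinal.{u}} (hκ : κ.card < α.cof)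
    {f : Ordinal.{u} → Ordinal.{u} → Ordinal.{v}}
    (hinc : ∀ β γ, β < γ → γ < α → evLT κ (f β) (f γ)) {A B : Set Ordinal.{u}}
    (hA : Unbdd A α) (hB : GoodWit κ α f B) :
    ∃ j < κ, ∀ i, j ≤ i → i < κ → ∀ γ ∈ B, ∃ β ∈ A, f γ i < f β i := by
  obtain ⟨⟨hBα, hBunb⟩, -, jB, hjB, hBmono⟩ := hB
  have hdom : ∀ γ, ∃ j, γ ∈ B → j < κ ∧ ∃ β ∈ A, ∀ i, j ≤ i → i < κ → f γ i < f β i := by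
    intro γ
    by_cases hγ : γ ∈ B
    · obtain ⟨β, hβA, hγβ⟩ := hA.2 γ (hBα hγ)
      obtain ⟨j, hj, hlt⟩ := hinc γ β hγβ (hA.1 hβA)
      exact ⟨j, fun _ => ⟨hj, β, hβA, hlt⟩⟩
    · exact ⟨0, fun h => absurd h hγ⟩
  choose J hJ using hdom
  obtain ⟨j₀, hj₀, hcofinal⟩ :=
    exists_lt_forall_exists_le_of_lt_cof hκ hBunb J fun γ hγ => (hJ γ hγ).1
  refine ⟨max jB j₀, max_lt hjB hj₀, fun i hi hiκ γ hγ => ?_⟩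
  obtain ⟨γ', hγ'B, hγγ', hJγ'⟩ := hcofinal γ (hBα hγ)
  obtain ⟨β, hβA, hγ'β⟩ := (hJ γ' hγ'B).2
  exact ⟨β, hβA, (hBmono i (le_of_max_le_left hi) hiκ γ hγ γ' hγ'B hγγ').trans
    (hγ'β i (hJγ'.trans (le_of_max_le_right hi)) hiκ)⟩

theorem ptSup_eq_of_forall_exists_le {f : Ordinal → Ordinal → Ordinal} {A B : Set Ordinal}
    {i : Ordinal} (hAB : ∀ β ∈ A, ∃ γ ∈ B, f β i ≤ f γ i)
    (hBA : ∀ γ ∈ B, ∃ β ∈ A, f γ i ≤ f β i) : ptSup f A i = ptSup f B i := by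
  apply csSup_eq_csSup_of_forall_exists_le
  · rintro _ ⟨β, hβ, rfl⟩
    obtain ⟨γ, hγ, hle⟩ := hAB β hβ
    exact ⟨f γ i, mem_image_of_mem _ hγ, hle⟩
  · rintro _ ⟨γ, hγ, rfl⟩
    obtain ⟨β, hβ, hle⟩ := hBA γ hγ
    exact ⟨f β i, mem_image_of_mem _ hβ, hle⟩

theorem stmt_8_general (lam : Cardinal)
    (α : Ordinal) (hcofα : lam < α.cof)
    (f : Ordinal → Ordinal → Ordinal)
    (hinc : ∀ β γ, β < γ → γ < α → evLT lam.ord (f β) (f γ))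
    (A B : Set Ordinal) (hA : GoodWit lam.ord α f A) (hB : GoodWit lam.ord α f B) :
    ∃ j < lam.ord, ∀ i, j ≤ i → i < lam.ord → ptSup f A i = ptSup f B i := by
  have hκ : lam.ord.card < α.cof := by rwa [card_ord]
  obtain ⟨j₁, hj₁, hAB⟩ := hA.eventually_forall_exists_lt hκ hinc hB.1
  obtain ⟨j₂, hj₂, hBA⟩ := hB.eventually_forall_exists_lt hκ hinc hA.1
  refine ⟨max j₁ j₂, max_lt hj₁ hj₂, fun i hi hiκ => ptSup_eq_of_forall_exists_le ?_ ?_⟩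
  · intro β hβ
    obtain ⟨γ, hγ, hlt⟩ := hAB i (le_of_max_le_left hi) hiκ β hβ
    exact ⟨γ, hγ, hlt.le⟩
  · intro γ hγ
    obtain ⟨β, hβ, hlt⟩ := hBA i (le_of_max_le_right hi) hiκ γ hγ
    exact ⟨β, hβ, hlt.le⟩

/-- any two sets witnessing goodness give eventually equal pointwise suprema. -/
theorem stmt_8 (lam : Cardinal) (hlam : lam.IsRegular) (hω : ℵ₀ < lam)
    (μ : Ordinal → Cardinal) (hμreg : ∀ i < lam.ord, (μ i).IsRegular)
    (α : Ordinal) (hcofα : lam < α.cof)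
    (f : Ordinal → Ordinal → Ordinal)
    (hprod : ∀ β < α, ∀ i < lam.ord, f β i < (μ i).ord)
    (hinc : ∀ β γ, β < γ → γ < α → evLT lam.ord (f β) (f γ))
    (A B : Set Ordinal) (hA : GoodWit lam.ord α f A) (hB : GoodWit lam.ord α f B) :
    ∃ j < lam.ord, ∀ i, j ≤ i → i < lam.ord → ptSup f A i = ptSup f B i :=
  stmt_8_general lam α hcofα f hinc A B hA hB
end

section
/- Let λ be a regular uncountable cardinal and ⟨f_β : β < α⟩ a <*-increasing sequence in ∏_{i<λ} μ_i with cf(α) = λ. If C and D are clubs in α of order type λ, enumerated as C = ⟨β_i : i<λ⟩ and D = ⟨γ_i : i<λ⟩, then the diagonal suprema f^Δ_C(i) := sup_{j<i} f_{β_j}(i) and f^Δ_D(i) := sup_{j<i} f_{γ_j}(i) agree on a club: there is a club E ⊆ λ such that f^Δ_C(i) = f^Δ_D(i) for all i ∈ E. -/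
/-!
For every `j < λ` the `<*`-increasing sequence eventually puts `f_{β_j}` below some `f_{γ_{j'}}`:
pick `γ_{j'} > β_j` (unboundedness of `D`) and let `g j` be larger than `j'` and than the point
from which `f_{β_j} < f_{γ_{j'}}`. Symmetrically we get `g'`. At every closure point `i` of
`g ⊔ g'` (and these form a club, as `λ` is regular uncountable), each term `f_{β_j}(i)` with
`j < i` is below a term `f_{γ_{j'}}(i)` with `j' < i`, and vice versa, so the two diagonal
suprema coincide.
-/

open Cardinal Set

theorem IsClubOrd.unbdd {C : Set Ordinal} {κ : Ordinal} (hC : IsClubOrd C κ) : Unbdd C κ :=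
  ⟨hC.1, hC.2.2⟩

theorem isClubOrd_closurePoints {κ : Cardinal} (hκ : κ.IsRegular) (hω : ℵ₀ < κ)
    {h : Ordinal → Ordinal} (hh : ∀ j < κ.ord, h j < κ.ord) :
    IsClubOrd {i | i < κ.ord ∧ ∀ j < i, h j < i} κ.ord := by
  refine ⟨fun i hi => hi.1, fun i hi ⟨_, hlim⟩ => ⟨hi, fun j hj => ?_⟩, fun β hβ => ?_⟩
  · obtain ⟨γ, hγ, hjγ, hγi⟩ := hlim j hj
    exact (hγ.2 j hjγ).trans hγi
  -- Every fixed point of `F` is a closure point of `h`; `nfp` supplies one above `β`.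
  let F : Ordinal → Ordinal := fun x => ⨆ j : Iio x, h j + 1
  have hF : ∀ x < κ.ord, F x < κ.ord := fun x hx =>
    Ordinal.lift_iSup_lt_of_lt_cof
      (by rwa [← Ordinal.lift_cof, hκ.cof_ord, mk_Iio_ordinal, lift_lift, lift_lt, ← lt_ord])
      fun j => (isSuccLimit_ord hω.le).succ_lt (hh j (j.2.trans hx))
  refine ⟨Ordinal.nfp F (β + 1),
    ⟨Cardinal.nfp_lt_ord_of_isRegular hκ hω.ne' hF ((isSuccLimit_ord hω.le).succ_lt hβ),
      fun j hj => ?_⟩, (lt_add_one β).trans_le (Ordinal.le_nfp F _)⟩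
  obtain ⟨n, hn⟩ := Ordinal.lt_nfp_iff.1 hj
  calc h j < h j + 1 := lt_add_one _
    _ ≤ F (F^[n] (β + 1)) := Ordinal.le_iSup (fun j : Iio _ => h j + 1) ⟨j, hn⟩
    _ = F^[n + 1] (β + 1) := (Function.iterate_succ_apply' F n _).symm
    _ ≤ Ordinal.nfp F (β + 1) := Ordinal.iterate_le_nfp F _ _

theorem exists_domination_bound {κ α : Ordinal} (hκ : Order.IsSuccLimit κ)
    {f : Ordinal → Ordinal → Ordinal} (hinc : ∀ β γ, β < γ → γ < α → evLT κ (f β) (f γ))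
    {u v : Ordinal → Ordinal} (hu : ∀ j < κ, u j < α) (hv : Unbdd (v '' Iio κ) α) :
    ∃ g : Ordinal → Ordinal, ∀ j < κ, g j < κ ∧
      ∀ i, g j ≤ i → i < κ → ∃ j' < g j, f (u j) i < f (v j') i := by
  have (j : Ordinal) : ∃ m, j < κ → m < κ ∧
      ∀ i, m ≤ i → i < κ → ∃ j' < m, f (u j) i < f (v j') i := by
    by_cases hj : j < κ
    · obtain ⟨_, ⟨j', hj', rfl⟩, hlt⟩ := hv.2 (u j) (hu j hj)
      obtain ⟨w, hw, hdom⟩ := hinc (u j) (v j') hlt (hv.1 ⟨j', hj', rfl⟩)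
      refine ⟨(j' + 1) ⊔ w, fun _ => ⟨max_lt (hκ.succ_lt hj') hw, fun i hi hiκ =>
        ⟨j', (lt_add_one j').trans_le (le_max_left _ _),
          hdom i ((le_max_right _ _).trans hi) hiκ⟩⟩⟩
    · exact ⟨0, fun h => absurd h hj⟩
  choose g hg using this
  exact ⟨g, hg⟩

theorem csSup_le_csSup_of_forall_exists_le {α : Type*} [ConditionallyCompleteLinearOrderBot α]
    {s t : Set α} (ht : BddAbove t) (h : ∀ x ∈ s, ∃ y ∈ t, x ≤ y) : sSup s ≤ sSup t :=
  csSup_le' fun x hx =>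
    let ⟨_, hy, hxy⟩ := h x hx
    hxy.trans (le_csSup ht hy)

theorem sSup_image_Iio_le_of_bound {κ : Ordinal} {f : Ordinal → Ordinal → Ordinal}
    {u v g : Ordinal → Ordinal}
    (hg : ∀ j < κ, ∀ i, g j ≤ i → i < κ → ∃ j' < g j, f (u j) i < f (v j') i)
    {i : Ordinal} (hi : i < κ) (hgi : ∀ j < i, g j < i)
    (hbdd : BddAbove ((fun j => f (v j) i) '' Iio i)) :
    sSup ((fun j => f (u j) i) '' Iio i) ≤ sSup ((fun j => f (v j) i) '' Iio i) := by
  refine csSup_le_csSup_of_forall_exists_le hbdd ?_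
  rintro _ ⟨j, hj, rfl⟩
  obtain ⟨j', hj', hlt⟩ := hg j (hj.trans hi) i (hgi j hj).le hi
  exact ⟨_, ⟨j', hj'.trans (hgi j hj), rfl⟩, hlt.le⟩

theorem stmt_9_general (lam : Cardinal) (hlam : lam.IsRegular) (hω : ℵ₀ < lam)
    (μ : Ordinal → Cardinal)
    (α : Ordinal)
    (f : Ordinal → Ordinal → Ordinal)
    (hprod : ∀ β < α, ∀ i < lam.ord, f β i < (μ i).ord)
    (hinc : ∀ β γ, β < γ → γ < α → evLT lam.ord (f β) (f γ))
    (b c : Ordinal → Ordinal)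
    (hbC : IsClubOrd (b '' Set.Iio lam.ord) α) (hcD : IsClubOrd (c '' Set.Iio lam.ord) α) :
    ∃ E : Set Ordinal, IsClubOrd E lam.ord ∧ ∀ i ∈ E,
      sSup ((fun j => f (b j) i) '' Set.Iio i) =
        sSup ((fun j => f (c j) i) '' Set.Iio i) := by
  have hlim := isSuccLimit_ord hω.le
  -- `f` takes values in a possibly larger universe, so boundedness must come from `hprod`.
  have hbdd {v : Ordinal → Ordinal} (hv : IsClubOrd (v '' Iio lam.ord) α) {i : Ordinal}
      (hi : i < lam.ord) : BddAbove ((fun j => f (v j) i) '' Iio i) :=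
    ⟨(μ i).ord, by
      rintro _ ⟨j, hj, rfl⟩
      exact (hprod _ (hv.1 ⟨j, hj.trans hi, rfl⟩) i hi).le⟩
  obtain ⟨g, hg⟩ := exists_domination_bound hlim hinc (fun j hj => hbC.1 ⟨j, hj, rfl⟩) hcD.unbdd
  obtain ⟨g', hg'⟩ := exists_domination_bound hlim hinc (fun j hj => hcD.1 ⟨j, hj, rfl⟩) hbC.unbdd
  refine ⟨_, isClubOrd_closurePoints hlam hω (h := g ⊔ g') fun j hj =>
    max_lt (hg j hj).1 (hg' j hj).1, fun i ⟨hi, hgi⟩ => le_antisymm ?_ ?_⟩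
  · exact sSup_image_Iio_le_of_bound (fun j hj => (hg j hj).2) hi
      (fun j hj => (le_max_left _ _).trans_lt (hgi j hj)) (hbdd hcD hi)
  · exact sSup_image_Iio_le_of_bound (fun j hj => (hg' j hj).2) hi
      (fun j hj => (le_max_right _ _).trans_lt (hgi j hj)) (hbdd hbC hi)

/-- diagonal suprema along two clubs of order type `λ` agree on a club. -/
theorem stmt_9 (lam : Cardinal) (hlam : lam.IsRegular) (hω : ℵ₀ < lam)
    (μ : Ordinal → Cardinal) (hμreg : ∀ i < lam.ord, (μ i).IsRegular)
    (α : Ordinal) (hcofα : α.cof = lam)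
    (f : Ordinal → Ordinal → Ordinal)
    (hprod : ∀ β < α, ∀ i < lam.ord, f β i < (μ i).ord)
    (hinc : ∀ β γ, β < γ → γ < α → evLT lam.ord (f β) (f γ))
    (b c : Ordinal → Ordinal)
    (hb : StrictMonoOn b (Set.Iio lam.ord)) (hc : StrictMonoOn c (Set.Iio lam.ord))
    (hbC : IsClubOrd (b '' Set.Iio lam.ord) α) (hcD : IsClubOrd (c '' Set.Iio lam.ord) α) :
    ∃ E : Set Ordinal, IsClubOrd E lam.ord ∧ ∀ i ∈ E,
      sSup ((fun j => f (b j) i) '' Set.Iio i) =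
        sSup ((fun j => f (c j) i) '' Set.Iio i) :=
  stmt_9_general lam hlam hω μ α f hprod hinc b c hbC hcD
end

section
/- If a product ∏_{i<λ} μ_i on a singular cardinal κ of uncountable cofinality λ carries a good scale, then it carries a scale ⟨g_α : α < κ⁺⟩ such that every α < κ⁺ with cf(α) > λ is a good point of ⟨g_α⟩. -/
open Cardinal Set

/-!
Let `e` enumerate the club `D` of good points and put `g α = f (e α)`; as `e` is strictly
increasing, `g` is again a scale. As `e` is also continuous, a point `α` of cofinality `> λ` is
sent to `e α ∈ D`, of the same cofinality, hence good for `f`. A good point of cofinality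
`> λ` has goodness witnesses inside every unbounded subset of it, in particular inside
`e '' α`, and such a witness pulls back along `e` to a witness for `g` at `α`.
-/

open Order Ordinal

theorem iSup_Iio_lt_of_card_lt_cof {ξ a : Ordinal} (h : ξ.card < a.cof)
    {g : Iio ξ → Ordinal} (hg : ∀ i, g i < a) : ⨆ i, g i < a := by
  apply lift_iSup_lt_of_lt_cof _ hg
  simpa [Cardinal.mk_Iio_ordinal, ← lift_cof, ← Ordinal.lift_card] using h

theorem evLT.trans {lam : Ordinal} {f g h : Ordinal → Ordinal}
    (hfg : evLT lam f g) (hgh : evLT lam g h) : evLT lam f h := by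
  obtain ⟨j₁, hj₁, h₁⟩ := hfg
  obtain ⟨j₂, hj₂, h₂⟩ := hgh
  exact ⟨max j₁ j₂, max_lt hj₁ hj₂, fun i hi hil =>
    (h₁ i (le_of_max_le_left hi) hil).trans (h₂ i (le_of_max_le_right hi) hil)⟩

theorem exists_unbounded_le_of_lt_cof {o : Ordinal} {lam : Cardinal} (hl : lam < o.cof)
    {m : Ordinal → Ordinal} (hm : ∀ ξ < o, m ξ < lam.ord) :
    ∃ j < lam.ord, ∀ β < o, ∃ ξ < o, β < ξ ∧ m ξ ≤ j := by
  have ho : 0 < o := pos_iff_ne_zero.2 fun h => by simp [h] at hl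
  have hlam : 0 < lam := ord_pos.1 (zero_le.trans_lt (hm 0 ho))
  have hlim : IsSuccLimit o := one_lt_cof_iff.1 ((Cardinal.one_le_iff_pos.2 hlam).trans_lt hl)
  by_contra! hcon
  choose! b hbo hb using hcon
  set ξ := ⨆ j : Iio lam.ord, b j + 1
  have hξ : ξ < o := iSup_Iio_lt_of_card_lt_cof (by rwa [card_ord])
    fun j => hlim.add_one_lt (hbo j j.2)
  have hbξ : b (m ξ) < ξ :=
    (lt_add_one _).trans_le (Ordinal.le_iSup (fun j : Iio lam.ord => b j + 1) ⟨_, hm ξ hξ⟩)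
  exact (hb (m ξ) (hm ξ hξ) ξ hξ hbξ).false

theorem exists_seq_mem_of_unbounded {θ : Cardinal} (hθ : θ.ord.cof = θ) {U : Set Ordinal}
    (hU : ∀ β < θ.ord, ∃ ξ ∈ U, β < ξ) (n : Ordinal → Ordinal)
    (hn : ∀ ξ ∈ U, n ξ < θ.ord) :
    ∃ s : Ordinal → Ordinal, ∀ ξ < θ.ord, s ξ ∈ U ∧ ξ < s ξ ∧ ∀ ζ < ξ, n (s ζ) < s ξ := by
  choose! pick hpickU hpick using hU
  let s : Ordinal → Ordinal := wellFounded_lt.fix fun ξ s =>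
    pick (max ξ (⨆ ζ : Iio ξ, n (s ζ ζ.2)))
  let bound (ξ : Ordinal) : Ordinal := max ξ (⨆ ζ : Iio ξ, n (s ζ))
  have hs : ∀ ξ, s ξ = pick (bound ξ) := fun ξ => wellFounded_lt.fix_eq _ ξ
  have hbound : ∀ ξ < θ.ord, bound ξ < θ.ord := by
    intro ξ
    induction ξ using WellFoundedLT.induction with
    | ind ξ IH =>
      intro hξ
      refine max_lt hξ (iSup_Iio_lt_of_card_lt_cof (by rw [hθ]; exact lt_ord.1 hξ) ?_)
      rintro ⟨ζ, hζ⟩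
      rw [hs]
      exact hn _ (hpickU _ (IH ζ hζ (hζ.trans hξ)))
  refine ⟨s, fun ξ hξ => ⟨hs ξ ▸ hpickU _ (hbound ξ hξ), ?_, fun ζ hζ => ?_⟩⟩
  · exact (le_max_left _ _).trans_lt (hs ξ ▸ hpick _ (hbound ξ hξ))
  · refine (Ordinal.le_iSup (fun ζ : Iio ξ => n (s ζ)) ⟨ζ, hζ⟩).trans_lt ?_
    exact (le_max_right _ _).trans_lt (hs ξ ▸ hpick _ (hbound ξ hξ))

theorem goodWit_image {lam γ : Ordinal} {f : Ordinal → Ordinal → Ordinal}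
    {b : Ordinal → Ordinal} (hb : StrictMonoOn b (Iio γ.cof.ord))
    (hbγ : ∀ ξ < γ.cof.ord, b ξ < γ) (hcofinal : ∀ β < γ, ∃ ξ < γ.cof.ord, β < b ξ)
    {j : Ordinal} (hj : j < lam)
    (hgood : ∀ i, j ≤ i → i < lam → ∀ ζ < γ.cof.ord, ∀ ξ < γ.cof.ord, ζ < ξ →
      f (b ζ) i < f (b ξ) i) :
    GoodWit lam γ f (b '' Iio γ.cof.ord) := by
  refine ⟨⟨?_, fun β hβ => ?_⟩, ⟨b, hb, rfl⟩, j, hj, ?_⟩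
  · rintro _ ⟨ξ, hξ, rfl⟩
    exact hbγ ξ hξ
  · obtain ⟨ξ, hξ, hβξ⟩ := hcofinal β hβ
    exact ⟨b ξ, mem_image_of_mem b hξ, hβξ⟩
  · rintro i hji hi _ ⟨ζ, hζ, rfl⟩ _ ⟨ξ, hξ, rfl⟩ hlt
    exact hgood i hji hi ζ hζ ξ hξ ((hb.lt_iff_lt hζ hξ).1 hlt)

theorem exists_mem_between_evLT {lam γ : Ordinal} {f : Ordinal → Ordinal → Ordinal}
    (hinc : ∀ x y, x < y → y < γ → evLT lam (f x) (f y)) {A C : Set Ordinal}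
    (hA : Unbdd A γ) (hC : Unbdd C γ) {x : Ordinal} (hx : x < γ) :
    ∃ c ∈ C, ∃ y ∈ A, x < c ∧ c < y ∧
      ∃ m < lam, ∀ i, m ≤ i → i < lam → f x i < f c i ∧ f c i < f y i := by
  obtain ⟨c, hcC, hxc⟩ := hC.2 x hx
  obtain ⟨y, hyA, hcy⟩ := hA.2 c (hC.1 hcC)
  obtain ⟨m₁, hm₁, h₁⟩ := hinc _ _ hxc (hC.1 hcC)
  obtain ⟨m₂, hm₂, h₂⟩ := hinc _ _ hcy (hA.1 hyA)
  exact ⟨c, hcC, y, hyA, hxc, hcy, max m₁ m₂, max_lt hm₁ hm₂, fun i hi hil =>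
    ⟨h₁ i (le_of_max_le_left hi) hil, h₂ i (le_of_max_le_right hi) hil⟩⟩

/-- Interleave `c η ∈ C` with the enumeration `a` of `A` as `a η < c η < a (n η)`. By the
pigeonhole principle the index from which `f (a η) <* f (c η) <* f (a (n η))` holds is a single
`k` for unboundedly many `η`; along a subsequence `s` of those with `n (s ζ) < s ξ` the
inequalities chain through the goodness of `A`. -/
theorem GoodWit.exists_subset {lam : Cardinal} {γ : Ordinal} (hγ : lam < γ.cof)
    {f : Ordinal → Ordinal → Ordinal} {A : Set Ordinal} (hA : GoodWit lam.ord γ f A)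
    (hinc : ∀ x y, x < y → y < γ → evLT lam.ord (f x) (f y)) {C : Set Ordinal}
    (hC : Unbdd C γ) : ∃ B ⊆ C, GoodWit lam.ord γ f B := by
  obtain ⟨hAunb, ⟨a, ha, rfl⟩, j, hj, hgoodA⟩ := hA
  have hstep : ∀ η < γ.cof.ord, ∃ c n m, c ∈ C ∧ a η < c ∧ n < γ.cof.ord ∧ c < a n ∧
      m < lam.ord ∧ ∀ i, m ≤ i → i < lam.ord → f (a η) i < f c i ∧ f c i < f (a n) i := by
    intro η hη
    obtain ⟨c, hcC, _, ⟨n, hn, rfl⟩, hac, hca, m, hm, hcm⟩ :=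
      exists_mem_between_evLT hinc hAunb hC (hAunb.1 (mem_image_of_mem a hη))
    exact ⟨c, n, m, hcC, hac, hn, hca, hm, hcm⟩
  choose! c n m hcC hac hn hca hm hcm using hstep
  obtain ⟨k, hk, hU⟩ := exists_unbounded_le_of_lt_cof (by rwa [Ordinal.cof_ord_cof]) hm
  obtain ⟨s, hs⟩ := exists_seq_mem_of_unbounded (Ordinal.cof_ord_cof γ)
    (U := {η | η < γ.cof.ord ∧ m η ≤ k})
    (fun β hβ => by obtain ⟨ξ, hξ, hβξ, hmξ⟩ := hU β hβ; exact ⟨ξ, ⟨hξ, hmξ⟩, hβξ⟩)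
    n (fun η hη => hn η hη.1)
  have hchain : ∀ ζ < γ.cof.ord, ∀ ξ < γ.cof.ord, ζ < ξ → c (s ζ) < c (s ξ) ∧
      ∀ i, max j k ≤ i → i < lam.ord → f (c (s ζ)) i < f (c (s ξ)) i := by
    intro ζ hζ ξ hξ hζξ
    obtain ⟨⟨hsζ, hmζ⟩, -, -⟩ := hs ζ hζ
    obtain ⟨⟨hsξ, hmξ⟩, -, hnξ⟩ := hs ξ hξ
    have hnζ := hn _ hsζ
    have haa : a (n (s ζ)) < a (s ξ) := ha hnζ hsξ (hnξ ζ hζξ)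
    refine ⟨(hca _ hsζ).trans (haa.trans (hac _ hsξ)), fun i hi hil => ?_⟩
    have hki : k ≤ i := le_of_max_le_right hi
    calc f (c (s ζ)) i < f (a (n (s ζ))) i := (hcm _ hsζ i (hmζ.trans hki) hil).2
      _ < f (a (s ξ)) i := hgoodA i (le_of_max_le_left hi) hil _ (mem_image_of_mem a hnζ) _
          (mem_image_of_mem a hsξ) haa
      _ < f (c (s ξ)) i := (hcm _ hsξ i (hmξ.trans hki) hil).1
  refine ⟨(c ∘ s) '' Iio γ.cof.ord, ?_, goodWit_image (fun ζ hζ ξ hξ h => (hchain ζ hζ ξ hξ h).1)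
    (fun ξ hξ => hC.1 (hcC _ (hs ξ hξ).1.1)) (fun β hβ => ?_) (max_lt hj hk)
    (fun i hi hil ζ hζ ξ hξ h => (hchain ζ hζ ξ hξ h).2 i hi hil)⟩
  · rintro _ ⟨ξ, hξ, rfl⟩
    exact hcC _ (hs ξ hξ).1.1
  · obtain ⟨_, ⟨η, hη, rfl⟩, hβη⟩ := hAunb.2 β hβ
    obtain ⟨⟨hsη, -⟩, hηs, -⟩ := hs η hη
    exact ⟨η, hη, hβη.trans ((ha hη hsη hηs).trans (hac _ hsη))⟩

theorem GoodWit.preimage {lam α : Ordinal} {f : Ordinal → Ordinal → Ordinal}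
    {e : Ordinal → Ordinal} (he : StrictMono e) (hcof : (e α).cof = α.cof) {B : Set Ordinal}
    (hBe : B ⊆ e '' Iio α) (hB : GoodWit lam (e α) f B) :
    GoodWit lam α (fun ζ => f (e ζ)) (e ⁻¹' B) := by
  obtain ⟨⟨hBsub, hBunb⟩, ⟨v, hv, hBv⟩, j, hj, hgood⟩ := hB
  rw [hcof] at hv hBv
  have hvB : ∀ ξ < α.cof.ord, v ξ ∈ B := fun ξ hξ => hBv ▸ mem_image_of_mem v hξ
  have hw : ∀ ξ < α.cof.ord, e (Function.invFun e (v ξ)) = v ξ := fun ξ hξ =>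
    Function.invFun_eq (by obtain ⟨ζ, -, h⟩ := hBe (hvB ξ hξ); exact ⟨ζ, h⟩)
  have hpre : e ⁻¹' B = (Function.invFun e ∘ v) '' Iio α.cof.ord := by
    ext x
    rw [mem_preimage, hBv]
    constructor
    · rintro ⟨ξ, hξ, hvx⟩
      exact ⟨ξ, hξ, by rw [Function.comp_apply, hvx, Function.leftInverse_invFun he.injective]⟩
    · rintro ⟨ξ, hξ, rfl⟩
      exact ⟨ξ, hξ, (hw ξ hξ).symm⟩
  rw [hpre]
  refine goodWit_image (fun ζ hζ ξ hξ h => ?_) (fun ξ hξ => ?_) (fun β hβ => ?_) hj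
    (fun i hji hi ζ hζ ξ hξ h => ?_)
  · have hvv := hv hζ hξ h
    rw [← hw ζ hζ, ← hw ξ hξ] at hvv
    exact he.lt_iff_lt.1 hvv
  · have hvα : v ξ < e α := hBsub (hvB ξ hξ)
    rw [← hw ξ hξ] at hvα
    exact he.lt_iff_lt.1 hvα
  · obtain ⟨_, hx, hβx⟩ := hBunb (e β) (he hβ)
    rw [hBv] at hx
    obtain ⟨ξ, hξ, rfl⟩ := hx
    exact ⟨ξ, hξ, he.lt_iff_lt.1 (by rwa [Function.comp_apply, hw ξ hξ])⟩
  · simp only [Function.comp_apply, hw ζ hζ, hw ξ hξ]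
    exact hgood i hji hi _ (hvB ζ hζ) _ (hvB ξ hξ) (hv hζ hξ h)

theorem not_bddAbove_union_Ici (S : Set Ordinal) (κ : Ordinal) : ¬ BddAbove (S ∪ Ici κ) :=
  fun h => not_bddAbove_Ici κ (h.mono subset_union_right)

/-- Padding `D` with `Ici κ` makes `enumOrd` strictly monotone on all ordinals, while below
the order type of `D` it still enumerates `D`. -/
theorem isNormal_enumOrd_union_Ici {D : Set Ordinal} {κ : Ordinal}
    (hD : ∀ α < κ, IsLimPt D α → α ∈ D) : IsNormal (enumOrd (D ∪ Ici κ)) := by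
  refine isNormal_enumOrd (fun t ht htne htbdd => ?_) (not_bddAbove_union_Ici D κ)
  by_cases hmax : sSup t ∈ t
  · exact ht hmax
  by_cases hκ : κ ≤ sSup t
  · exact Or.inr hκ
  rw [not_le] at hκ
  have hlt : ∀ x ∈ t, x < sSup t := fun x hx =>
    (le_csSup htbdd hx).lt_of_ne fun h => hmax (h ▸ hx)
  refine Or.inl (hD _ hκ ⟨?_, fun β hβ => ?_⟩)
  · obtain ⟨x, hx⟩ := htne
    exact zero_le.trans_lt (hlt x hx)
  · obtain ⟨x, hx, hβx⟩ := (lt_csSup_iff htbdd htne).1 hβ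
    refine ⟨x, (ht hx).resolve_right fun hκx => ?_, hβx, hlt x hx⟩
    exact (hκx.trans (le_csSup htbdd hx)).not_gt hκ

theorem unbdd_image_Iio_of_isNormal {e : Ordinal → Ordinal} (he : IsNormal e) {α : Ordinal}
    (hα : IsSuccLimit α) : Unbdd (e '' Iio α) (e α) := by
  refine ⟨image_subset_iff.2 fun ζ hζ => he.strictMono hζ, fun β hβ => ?_⟩
  obtain ⟨ζ, hζ, hβζ⟩ := (he.lt_iff_exists_lt hα).1 hβ
  exact ⟨e ζ, mem_image_of_mem e hζ, hβζ⟩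

theorem enumOrd_union_Ici_lt {c : Cardinal} (hc : c.ord.cof = c) {S : Set Ordinal}
    (hSc : S ⊆ Iio c.ord) (hS : ∀ β < c.ord, ∃ γ ∈ S, β < γ) {ξ : Ordinal} (hξ : ξ < c.ord) :
    enumOrd (S ∪ Ici c.ord) ξ < c.ord := by
  induction ξ using WellFoundedLT.induction with
  | ind ξ IH =>
    have hsup : ⨆ ζ : Iio ξ, enumOrd (S ∪ Ici c.ord) ζ < c.ord :=
      iSup_Iio_lt_of_card_lt_cof (by rw [hc]; exact lt_ord.1 hξ)
        fun ζ => IH ζ ζ.2 (ζ.2.trans hξ)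
    obtain ⟨γ, hγS, hγ⟩ := hS _ hsup
    refine (enumOrd_le_of_forall_lt (Or.inl hγS) fun ζ hζ => ?_).trans_lt (hSc hγS)
    exact (Ordinal.le_iSup (fun ζ : Iio ξ => enumOrd (S ∪ Ici c.ord) ζ) ⟨ζ, hζ⟩).trans_lt hγ

theorem stmt_11_general (κ lam : Cardinal) (hω : ℵ₀ < lam)
    (hlt : lam < κ)
    (μ : Ordinal → Cardinal)
    (f : Ordinal → Ordinal → Ordinal)
    (hprod : ∀ α < (Order.succ κ).ord, ∀ i < lam.ord, f α i < (μ i).ord)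
    (hinc : ∀ α β, α < β → β < (Order.succ κ).ord → evLT lam.ord (f α) (f β))
    (hcofinal : ∀ h : Ordinal → Ordinal, (∀ i < lam.ord, h i < (μ i).ord) →
      ∃ α < (Order.succ κ).ord, evLT lam.ord h (f α))
    (hgood : ∃ D : Set Ordinal, IsClubOrd D (Order.succ κ).ord ∧
      ∀ α ∈ D, lam < α.cof → ∃ A, GoodWit lam.ord α f A) :
    ∃ g : Ordinal → Ordinal → Ordinal,
      (∀ α < (Order.succ κ).ord, ∀ i < lam.ord, g α i < (μ i).ord) ∧
      (∀ α β, α < β → β < (Order.succ κ).ord → evLT lam.ord (g α) (g β)) ∧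
      (∀ h : Ordinal → Ordinal, (∀ i < lam.ord, h i < (μ i).ord) →
        ∃ α < (Order.succ κ).ord, evLT lam.ord h (g α)) ∧
      ∀ α < (Order.succ κ).ord, lam < α.cof → ∃ A, GoodWit lam.ord α g A := by
  obtain ⟨D, ⟨hDsub, hDclosed, hDunb⟩, hDgood⟩ := hgood
  have hκ : ℵ₀ ≤ κ := hω.le.trans hlt.le
  set e := enumOrd (D ∪ Ici (succ κ).ord)
  have he : IsNormal e := isNormal_enumOrd_union_Ici hDclosed
  have heD : ∀ ξ < (succ κ).ord, e ξ ∈ D := fun ξ hξ =>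
    (enumOrd_mem (not_bddAbove_union_Ici D _) ξ).resolve_right
      (enumOrd_union_Ici_lt (isRegular_succ hκ).cof_ord hDsub hDunb hξ).not_ge
  have he_lt : ∀ ξ < (succ κ).ord, e ξ < (succ κ).ord := fun ξ hξ => hDsub (heD ξ hξ)
  refine ⟨fun α => f (e α), fun α hα => hprod _ (he_lt α hα),
    fun α β hαβ hβ => hinc _ _ (he.strictMono hαβ) (he_lt β hβ), fun h hh => ?_,
    fun α hα hαcof => ?_⟩
  · obtain ⟨α, hα, hhα⟩ := hcofinal h hh
    have hα1 : α + 1 < (succ κ).ord := (isSuccLimit_ord (hκ.trans (le_succ κ))).add_one_lt hα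
    exact ⟨α + 1, hα1, hhα.trans (hinc _ _ ((lt_add_one α).trans_le he.strictMono.le_apply)
      (he_lt _ hα1))⟩
  · have hαlim : IsSuccLimit α := one_lt_cof_iff.1 (one_lt_aleph0.trans (hω.trans hαcof))
    have hcof : (e α).cof = α.cof := cof_map_of_isNormal he hαlim
    obtain ⟨A, hA⟩ := hDgood _ (heD α hα) (hcof ▸ hαcof)
    obtain ⟨B, hBC, hB⟩ := hA.exists_subset (hcof ▸ hαcof)
      (fun x y hxy hy => hinc x y hxy (hy.trans (he_lt α hα)))
      (unbdd_image_Iio_of_isNormal he hαlim)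
    exact ⟨_, hB.preimage he.strictMono hcof hBC⟩

/-- a product carrying a good scale carries a scale all of whose points of
cofinality `> λ` are good. -/
theorem stmt_11 (κ lam : Cardinal) (hlam : lam.IsRegular) (hω : ℵ₀ < lam)
    (hcof : κ.ord.cof = lam) (hlt : lam < κ)
    (μ : Ordinal → Cardinal) (hμreg : ∀ i < lam.ord, (μ i).IsRegular)
    (hμmono : ∀ i j, i < j → j < lam.ord → μ i < μ j)
    (hμcof : sSup ((fun i => (μ i).ord) '' Set.Iio lam.ord) = κ.ord)
    (f : Ordinal → Ordinal → Ordinal)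
    (hprod : ∀ α < (Order.succ κ).ord, ∀ i < lam.ord, f α i < (μ i).ord)
    (hinc : ∀ α β, α < β → β < (Order.succ κ).ord → evLT lam.ord (f α) (f β))
    (hcofinal : ∀ h : Ordinal → Ordinal, (∀ i < lam.ord, h i < (μ i).ord) →
      ∃ α < (Order.succ κ).ord, evLT lam.ord h (f α))
    (hgood : ∃ D : Set Ordinal, IsClubOrd D (Order.succ κ).ord ∧
      ∀ α ∈ D, lam < α.cof → ∃ A, GoodWit lam.ord α f A) :
    ∃ g : Ordinal → Ordinal → Ordinal,
      (∀ α < (Order.succ κ).ord, ∀ i < lam.ord, g α i < (μ i).ord) ∧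
      (∀ α β, α < β → β < (Order.succ κ).ord → evLT lam.ord (g α) (g β)) ∧
      (∀ h : Ordinal → Ordinal, (∀ i < lam.ord, h i < (μ i).ord) →
        ∃ α < (Order.succ κ).ord, evLT lam.ord h (g α)) ∧
      ∀ α < (Order.succ κ).ord, lam < α.cof → ∃ A, GoodWit lam.ord α g A :=
  stmt_11_general κ lam hω hlt μ f hprod hinc hcofinal hgood
end

section
/- Unboundedness via interleaving: Let κ be singular with cf(κ) = λ > ω, let ⟨f_β : β < κ⁺⟩ be a <*-increasing sequence on ∏_{i∈S} κ_i⁺ (S ⊆ λ stationary), let α have cf(α) > λ, and suppose f_α is an exact upper bound of ⟨f_β : β < α⟩. Let F be a function on S with F(i) an unbounded subset of f_α(i) for each i ∈ S. Then for every ᾱ < α there exists β with ᾱ < β < α and j < λ such that for all i ∈ S with i ≥ j, f_β(i) is a limit point of F(i), provided f_β is (eventually) the pointwise supremum of an ω-sequence interleaved with elements of the F(i)'s; more precisely, there exist ⟨α_n : n<ω⟩ in (ᾱ, α) whose supremum β satisfies: for all sufficiently large i ∈ S, f_β(i) = sup_n f_{α_n}(i) ∈ lim F(i). -/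
/-!
Starting above `abar`, alternate two moves. Given `a n < α`, pick `g i ∈ F i` with
`f (a n) i < g i < f α i` for almost all `i` (possible since `F i` is unbounded in `f α i`), and use
exactness of `f α` to find `a (n + 1) < α` with `g <* f (a (n + 1))`. As `cf α > λ > ω`, the
supremum `β` of the `a n` is below `α`, and `f β i = sup_n f (a n) i` for almost all `i`. As `λ` is
regular and uncountable, the countably many thresholds `j_n` have a common bound `j < λ`; beyond
it every `f (a n) i` is followed by a point of `F i` below `f (a (n + 1)) i`, so `f β i` is a limit
point of `F i`.
-/

open Cardinal Set

open Filter Order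

namespace Ordinal

def tailsBelow (μ : Ordinal) : Filter Ordinal :=
  ⨅ (j) (_ : j < μ), 𝓟 (Ici j)

theorem hasBasis_tailsBelow {μ : Ordinal} (hμ : 0 < μ) :
    (tailsBelow μ).HasBasis (· < μ) Ici :=
  hasBasis_biInf_principal'
    (fun i hi j hj => ⟨max i j, max_lt hi hj, Ici_subset_Ici.2 (le_max_left i j),
      Ici_subset_Ici.2 (le_max_right i j)⟩) ⟨0, hμ⟩

theorem eventually_tailsBelow_inf_principal_iff {μ : Ordinal} (hμ : 0 < μ) {S : Set Ordinal}
    {p : Ordinal → Prop} :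
    (∀ᶠ i in tailsBelow μ ⊓ 𝓟 S, p i) ↔ ∃ j < μ, ∀ i ∈ S, j ≤ i → p i := by
  simp only [((hasBasis_tailsBelow hμ).inf_principal S).eventually_iff, mem_inter_iff, mem_Ici]
  grind

theorem countableInterFilter_tailsBelow {μ : Ordinal} (hμ : ℵ₀ < μ.cof) :
    CountableInterFilter (tailsBelow μ) where
  countable_sInter_mem T hT hmem := by
    have hμ0 : 0 < μ := cof_pos.1 (aleph0_pos.trans hμ)
    choose! j hj hjT using fun s hs => (hasBasis_tailsBelow hμ0).mem_iff.1 (hmem s hs)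
    have hjμ : ∀ x ∈ j '' T, x < μ := by rintro _ ⟨s, hs, rfl⟩; exact hj s hs
    have hsup : sSup (j '' T) < μ := by
      refine sSup_lt_of_lt_cof ((hT.image j).le_aleph0.trans_lt ?_) hjμ
      rw [← lift_cof]
      exact Cardinal.aleph0_lt_lift.2 hμ
    refine (hasBasis_tailsBelow hμ0).mem_iff.2 ⟨_, hsup, fun i hi => mem_sInter.2 fun s hs => ?_⟩
    exact hjT s hs ((le_csSup ⟨μ, fun x hx => (hjμ x hx).le⟩ (mem_image_of_mem j hs)).trans hi)

theorem isLimPt_iSup_of_interleaved {C : Set Ordinal} {s : ℕ → Ordinal}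
    (h : ∀ n, ∃ x ∈ C, s n < x ∧ x < s (n + 1)) : IsLimPt C (⨆ n, s n) := by
  choose x hxC hsx hxs using h
  have hle : ∀ n, s n ≤ ⨆ n, s n := Ordinal.le_iSup s
  refine ⟨zero_le.trans_lt ((hsx 0).trans ((hxs 0).trans_le (hle 1))), fun b hb => ?_⟩
  obtain ⟨n, hbn⟩ := (lt_ciSup_iff bddAbove_of_small).1 hb
  exact ⟨x n, hxC n, hbn.trans (hsx n), (hxs n).trans_le (hle (n + 1))⟩

end Ordinal

section Interleaving

variable {ι : Type*} {L : Filter ι} {f : Ordinal → ι → Ordinal} {α : Ordinal}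

theorem exists_gt_eventually_lt_of_exact (hα : IsSuccLimit α)
    (hinc : ∀ β γ, β < γ → γ ≤ α → ∀ᶠ i in L, f β i < f γ i)
    (heub : ∀ g : ι → Ordinal, (∀ᶠ i in L, g i < f α i) → ∃ β < α, ∀ᶠ i in L, g i < f β i)
    {g : ι → Ordinal} (hg : ∀ᶠ i in L, g i < f α i) {γ : Ordinal} (hγ : γ < α) :
    ∃ β, γ < β ∧ β < α ∧ ∀ᶠ i in L, g i < f β i := by
  obtain ⟨β, hβα, hgβ⟩ := heub g hg
  have hmax : max (succ γ) β < α := max_lt (hα.succ_lt hγ) hβα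
  refine ⟨max (succ γ) β, (lt_succ γ).trans_le (le_max_left _ _), hmax, ?_⟩
  rcases (le_max_right (succ γ) β).eq_or_lt with h | h
  · rwa [← h]
  · filter_upwards [hgβ, hinc _ _ h hmax.le] with i hgi hβi using hgi.trans hβi

theorem exists_gt_interleaved (hα : IsSuccLimit α)
    (hinc : ∀ β γ, β < γ → γ ≤ α → ∀ᶠ i in L, f β i < f γ i)
    (heub : ∀ g : ι → Ordinal, (∀ᶠ i in L, g i < f α i) → ∃ β < α, ∀ᶠ i in L, g i < f β i)
    {F : ι → Set Ordinal} (hF : ∀ᶠ i in L, Unbdd (F i) (f α i)) {β : Ordinal} (hβ : β < α) :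
    ∃ β', β < β' ∧ β' < α ∧ ∀ᶠ i in L, ∃ x ∈ F i, f β i < x ∧ x < f β' i := by
  have hbetween : ∀ᶠ i in L, ∃ x ∈ F i, f β i < x ∧ x < f α i := by
    filter_upwards [hF, hinc β α hβ le_rfl] with i hFi hβi
    obtain ⟨x, hx, hβx⟩ := hFi.2 _ hβi
    exact ⟨x, hx, hβx, hFi.1 hx⟩
  choose! g hgF hβg hgα using fun i (h : ∃ x ∈ F i, f β i < x ∧ x < f α i) => h
  obtain ⟨β', hββ', hβ'α, hgβ'⟩ :=
    exists_gt_eventually_lt_of_exact hα hinc heub (hbetween.mono hgα) hβ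
  refine ⟨β', hββ', hβ'α, ?_⟩
  filter_upwards [hbetween, hgβ'] with i hi hgi using ⟨g i, hgF i hi, hβg i hi, hgi⟩

theorem exists_seq_interleaved (hα : IsSuccLimit α)
    (hinc : ∀ β γ, β < γ → γ ≤ α → ∀ᶠ i in L, f β i < f γ i)
    (heub : ∀ g : ι → Ordinal, (∀ᶠ i in L, g i < f α i) → ∃ β < α, ∀ᶠ i in L, g i < f β i)
    {F : ι → Set Ordinal} (hF : ∀ᶠ i in L, Unbdd (F i) (f α i)) {γ : Ordinal} (hγ : γ < α) :
    ∃ a : ℕ → Ordinal, (∀ n, γ < a n ∧ a n < α) ∧ StrictMono a ∧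
      ∀ n, ∀ᶠ i in L, ∃ x ∈ F i, f (a n) i < x ∧ x < f (a (n + 1)) i := by
  have step : ∀ b : Ioo γ α, ∃ b' : Ioo γ α,
      b < b' ∧ ∀ᶠ i in L, ∃ x ∈ F i, f b i < x ∧ x < f b' i := fun b =>
    have ⟨β', hbβ', hβ'α, hβ'⟩ := exists_gt_interleaved hα hinc heub hF b.2.2
    ⟨⟨β', b.2.1.trans hbβ', hβ'α⟩, hbβ', hβ'⟩
  choose next hlt hnext using step
  let a (n : ℕ) : Ioo γ α := next^[n] ⟨succ γ, lt_succ γ, hα.succ_lt hγ⟩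
  have ha : ∀ n, a (n + 1) = next (a n) := fun n => Function.iterate_succ_apply' next n _
  refine ⟨fun n => a n, fun n => (a n).2, strictMono_nat_of_lt_succ fun n => ?_, fun n => ?_⟩
  · show (a n : Ordinal) < a (n + 1)
    rw [ha]
    exact hlt (a n)
  · simpa only [ha] using hnext (a n)

end Interleaving

theorem stmt_13_general (lam : Cardinal) (hlam : lam.IsRegular) (hω : ℵ₀ < lam)
    (S : Set Ordinal)
    (α : Ordinal) (hcofα : lam < α.cof)
    (f : Ordinal → Ordinal → Ordinal)
    (hinc : ∀ β γ, β < γ → γ ≤ α → ∃ j < lam.ord, ∀ i ∈ S, j ≤ i → f β i < f γ i)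
    (heub : ∀ g : Ordinal → Ordinal,
      (∃ j < lam.ord, ∀ i ∈ S, j ≤ i → g i < f α i) →
      ∃ β < α, ∃ j < lam.ord, ∀ i ∈ S, j ≤ i → g i < f β i)
    (hcont : ∀ a : ℕ → Ordinal, StrictMono a → (∀ n, a n < α) →
      ∃ j < lam.ord, ∀ i ∈ S, j ≤ i →
        f (sSup (Set.range a)) i = sSup (Set.range fun n => f (a n) i))
    (F : Ordinal → Set Ordinal) (hF : ∀ i ∈ S, Unbdd (F i) (f α i)) :
    ∀ abar < α, ∃ a : ℕ → Ordinal, (∀ n, abar < a n ∧ a n < α) ∧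
      abar < sSup (Set.range a) ∧ sSup (Set.range a) < α ∧
      ∃ j < lam.ord, ∀ i ∈ S, j ≤ i →
        f (sSup (Set.range a)) i = sSup (Set.range fun n => f (a n) i) ∧
        IsLimPt (F i) (f (sSup (Set.range a)) i) := by
  intro abar habar
  have hlam_cof : ℵ₀ < lam.ord.cof := by rwa [hlam.cof_ord]
  have hα_cof : ℵ₀ < α.cof := hω.trans hcofα
  have := Ordinal.countableInterFilter_tailsBelow hlam_cof
  simp_rw [← Ordinal.eventually_tailsBelow_inf_principal_iff
    (Ordinal.cof_pos.1 (aleph0_pos.trans hlam_cof))] at hinc heub hcont ⊢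
  obtain ⟨a, ha, hmono, hinter⟩ :=
    exists_seq_interleaved (Ordinal.one_lt_cof_iff.1 (one_lt_aleph0.trans hα_cof)) hinc heub
      (eventually_inf_principal.2 (.of_forall hF)) habar
  refine ⟨a, ha, (ha 0).1.trans_le (Ordinal.le_iSup a 0), ?_, ?_⟩
  · exact Ordinal.lift_iSup_lt_of_lt_cof (by simpa using hα_cof) fun n => (ha n).2
  · filter_upwards [hcont a hmono fun n => (ha n).2, eventually_countable_forall.2 hinter]
      with i hi hFi
    exact ⟨hi, hi ▸ Ordinal.isLimPt_iSup_of_interleaved hFi⟩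

/-- unboundedness of `C_F` via the interleaving argument. -/
theorem stmt_13 (κ lam : Cardinal) (hlam : lam.IsRegular) (hω : ℵ₀ < lam)
    (hcof : κ.ord.cof = lam)
    (k : Ordinal → Cardinal)
    (S : Set Ordinal) (hSsub : S ⊆ Set.Iio lam.ord) (hSstat : IsStat S lam.ord)
    (α : Ordinal) (hcofα : lam < α.cof)
    (f : Ordinal → Ordinal → Ordinal)
    (hprod : ∀ β ≤ α, ∀ i ∈ S, f β i < (Order.succ (k i)).ord)
    (hinc : ∀ β γ, β < γ → γ ≤ α → ∃ j < lam.ord, ∀ i ∈ S, j ≤ i → f β i < f γ i)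
    (heub : ∀ g : Ordinal → Ordinal,
      (∃ j < lam.ord, ∀ i ∈ S, j ≤ i → g i < f α i) →
      ∃ β < α, ∃ j < lam.ord, ∀ i ∈ S, j ≤ i → g i < f β i)
    (hcont : ∀ a : ℕ → Ordinal, StrictMono a → (∀ n, a n < α) →
      ∃ j < lam.ord, ∀ i ∈ S, j ≤ i →
        f (sSup (Set.range a)) i = sSup (Set.range fun n => f (a n) i))
    (F : Ordinal → Set Ordinal) (hF : ∀ i ∈ S, Unbdd (F i) (f α i)) :
    ∀ abar < α, ∃ a : ℕ → Ordinal, (∀ n, abar < a n ∧ a n < α) ∧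
      abar < sSup (Set.range a) ∧ sSup (Set.range a) < α ∧
      ∃ j < lam.ord, ∀ i ∈ S, j ≤ i →
        f (sSup (Set.range a)) i = sSup (Set.range fun n => f (a n) i) ∧
        IsLimPt (F i) (f (sSup (Set.range a)) i) :=
  stmt_13_general lam hlam hω S α hcofα f hinc heub hcont F hF
end

section
/- Order-type bound: Let κ be singular with cf(κ) = λ > ω such that τ^λ < κ for all τ < κ, let ⟨κ_i : i<λ⟩ be increasing cofinal in κ, and S ⊆ λ stationary. Let ⟨f_β : β < α⟩ be <*-increasing in ∏_{i∈S} κ_i⁺ and let F assign to each i ∈ S a set F(i) of ordinals with the property that for each i ∈ S there is j < i with ot(F(i)) < κ_j. Define C_F = {β < α : ∃j<λ ∀i∈S\j, f_β(i) ∈ F(i)} (taking limit points as membership if desired). Then |C_F| < κ; in particular ot(C_F) < κ. -/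
open Cardinal Set

/-!
By Fodor's lemma a single `j₀ < λ` bounds the order types of the `F i` by `κ_{j₀}` on a
stationary, hence unbounded, set `T ⊆ S`. Each `β ∈ C_F` is recorded by the values `f β i`,
`i ∈ T`, which eventually lie in `F i`; two distinct `β < γ` are told apart at any large enough
`i ∈ T`, since `f β i < f γ i` eventually. So `|C_F| ≤ (κ_{j₀} + 1) ^ λ < κ`.
-/

universe u v

theorem isClubOrd_closurePoints_s14 {c : Cardinal} (hc : c.IsRegular) (hω : ℵ₀ < c)
    {b : Ordinal → Ordinal} (hb : ∀ j < c.ord, b j < c.ord) :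
    IsClubOrd {x | x < c.ord ∧ ∀ j < x, b j < x} c.ord := by
  refine ⟨fun x hx => hx.1, ?_, fun β hβ => ?_⟩
  · rintro a ha ⟨-, hlim⟩
    refine ⟨ha, fun j hj => ?_⟩
    obtain ⟨γ, hγ, hjγ, hγa⟩ := hlim j hj
    exact (hγ.2 j hjγ).trans hγa
  · set h : Ordinal → Ordinal := fun x => ⨆ j : Iio x, b j + 1
    have hh : ∀ x < c.ord, h x < c.ord := by
      refine fun x hx => Ordinal.lift_iSup_add_one_lt_of_lt_cof ?_ fun j => hb j (j.2.trans hx)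
      rw [mk_Iio_ordinal, lift_lift, ← Ordinal.lift_cof, hc.cof_ord, lift_lt, ← lt_ord]
      exact hx
    -- every iterate of `h` bounds `b` below the previous one, so the limit is closed under `b`
    refine ⟨Ordinal.nfp h (β + 1), ⟨Ordinal.nfp_lt_ord (by rwa [hc.cof_ord]) hh
      ((isSuccLimit_ord hω.le).add_one_lt hβ), fun j hj => ?_⟩,
      (Order.lt_add_one_iff.2 le_rfl).trans_le (Ordinal.le_nfp h _)⟩
    obtain ⟨n, hn⟩ := Ordinal.lt_nfp_iff.1 hj
    calc b j < b j + 1 := Order.lt_add_one_iff.2 le_rfl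
      _ ≤ h (h^[n] (β + 1)) := Ordinal.le_iSup (fun j : Iio _ => b j + 1) ⟨j, hn⟩
      _ ≤ Ordinal.nfp h (β + 1) := by
        rw [← Function.iterate_succ_apply' h]; exact Ordinal.iterate_le_nfp h _ _

theorem IsStat.exists_unbdd_of_forall_exists_lt {c : Cardinal} (hc : c.IsRegular) (hω : ℵ₀ < c)
    {S : Set Ordinal} (hS : IsStat S c.ord) {P : Ordinal → Ordinal → Prop}
    (hP : ∀ i ∈ S, ∃ j < i, P i j) :
    ∃ j₀ < c.ord, Unbdd {i | i ∈ S ∧ i < c.ord ∧ ∃ j ≤ j₀, P i j} c.ord := by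
  by_contra! h
  have hbound : ∀ j₀ < c.ord, ∃ x < c.ord, ∀ i ∈ S, x < i → i < c.ord → ∀ j ≤ j₀, ¬P i j := by
    intro j₀ hj₀
    by_contra! hunbdd
    refine h j₀ hj₀ ⟨fun i hi => hi.2.1, fun x hx => ?_⟩
    obtain ⟨i, hiS, hxi, hi, j, hjj₀, hPij⟩ := hunbdd x hx
    exact ⟨i, ⟨hiS, hi, j, hjj₀, hPij⟩, hxi⟩
  choose! b hbL hb using hbound
  obtain ⟨i, hiS, hi, hbi⟩ := hS _ (isClubOrd_closurePoints_s14 hc hω hbL)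
  obtain ⟨j, hji, hPij⟩ := hP i hiS
  exact hb j (hji.trans hi) i hiS (hbi j hji) hi j le_rfl hPij

section Counting

variable {L : Ordinal.{v}} {T : Set Ordinal.{v}} {C : Set Ordinal.{u}}
  {f : Ordinal.{u} → Ordinal.{v} → Ordinal.{v}} {F : Ordinal.{v} → Set Ordinal.{v}}

-- `none` stands for the coordinates `i` where `f β i ∉ F i`, which are bounded in `L`.
open scoped Classical in
theorem injective_pi_option_of_eventually_mem (hT : Unbdd T L)
    (hmem : ∀ β ∈ C, ∃ j < L, ∀ i ∈ T, j ≤ i → f β i ∈ F i)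
    (hinc : ∀ β ∈ C, ∀ γ ∈ C, β < γ → ∃ j < L, ∀ i ∈ T, j ≤ i → f β i < f γ i) :
    Function.Injective fun (β : C) (i : T) =>
      if h : f β i ∈ F i then some (⟨f β i, h⟩ : F i) else none := by
  refine Function.Injective.of_lt_imp_ne fun β γ hβγ heq => ?_
  obtain ⟨j₁, hj₁, h₁⟩ := hmem β β.2
  obtain ⟨j₂, hj₂, h₂⟩ := hmem γ γ.2
  obtain ⟨j₃, hj₃, h₃⟩ := hinc β β.2 γ γ.2 hβγ
  obtain ⟨i, hiT, hi⟩ := hT.2 (max j₁ (max j₂ j₃)) (max_lt hj₁ (max_lt hj₂ hj₃))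
  simp only [max_lt_iff] at hi
  have hval := congrFun heq ⟨i, hiT⟩
  simp only [h₁ i hiT hi.1.le, h₂ i hiT hi.2.1.le, dif_pos, Option.some.injEq, Subtype.mk.injEq]
    at hval
  exact (h₃ i hiT hi.2.2.le).ne hval

theorem lift_mk_le_of_eventually_mem (hT : Unbdd T L)
    (hmem : ∀ β ∈ C, ∃ j < L, ∀ i ∈ T, j ≤ i → f β i ∈ F i)
    (hinc : ∀ β ∈ C, ∀ γ ∈ C, β < γ → ∃ j < L, ∀ i ∈ T, j ≤ i → f β i < f γ i)
    {μ : Cardinal.{v}} (hF : ∀ i ∈ T, #(F i) ≤ lift.{v + 1} μ) :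
    lift.{v} #C ≤ lift.{u + 1} ((μ + 1) ^ L.card) := by
  have hpi : #(∀ i : T, Option (F i)) ≤ lift.{v + 1} ((μ + 1) ^ L.card) := by
    calc #(∀ i : T, Option (F i)) = Cardinal.prod fun i : T => #(F i) + 1 := by
          simp only [mk_pi, mk_option]
      _ ≤ Cardinal.prod fun _ : T => lift.{v + 1} (μ + 1) :=
        prod_le_prod _ _ fun i => by simpa using add_le_add_left (hF i i.2) 1
      _ = lift.{v + 1} (μ + 1) ^ #T := by simp
      _ ≤ lift.{v + 1} (μ + 1) ^ lift.{v + 1} L.card := by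
        refine power_le_power_left (by simp) ?_
        rw [← mk_Iio_ordinal]
        exact mk_le_mk_of_subset hT.1
      _ = lift.{v + 1} ((μ + 1) ^ L.card) := (lift_power _ _).symm
  have hinj := lift_mk_le_lift_mk_of_injective (injective_pi_option_of_eventually_mem hT hmem hinc)
  rw [← lift_le.{v + 1}, lift_lift, lift_lift]
  simpa only [lift_lift] using hinj.trans (lift_le.2 hpi)

end Counting

theorem HasOtype.mk_le {A : Set Ordinal.{u}} {ξ : Ordinal.{u}} (h : HasOtype A ξ) :
    #A ≤ lift.{u + 1} ξ.card := by
  obtain ⟨e, -, rfl⟩ := h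
  exact mk_image_le.trans (mk_Iio_ordinal ξ).le

theorem hasOtype_of_orderIso {A : Set Ordinal.{u}} {ξ : Ordinal.{v}} (g : Iio ξ ≃o A) :
    HasOtype A ξ := by
  refine ⟨fun o => if h : o ∈ Iio ξ then g ⟨o, h⟩ else 0, fun x hx y hy hxy => ?_, ?_⟩
  · dsimp only
    rw [dif_pos hx, dif_pos hy]
    exact g.strictMono hxy
  · ext β
    refine ⟨fun hβ => ⟨g.symm ⟨β, hβ⟩, (g.symm ⟨β, hβ⟩).2, by simp⟩, ?_⟩
    rintro ⟨o, ho, rfl⟩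
    dsimp only
    rw [dif_pos ho]
    exact (g _).2

theorem hasOtype_type (A : Set Ordinal.{u}) :
    HasOtype A (Ordinal.type ((· < ·) : A → A → Prop)) :=
  hasOtype_of_orderIso (OrderIso.ofRelIsoLT (Ordinal.enum _))

theorem lt_of_sSup_ord_eq {L : Ordinal.{u}} (hL : Order.IsSuccLimit L)
    {k : Ordinal → Cardinal.{u}} (hk : ∀ i j, i < j → j < L → k i < k j) {κ : Cardinal.{u}}
    (hκ : sSup ((fun i => (k i).ord) '' Iio L) = κ.ord) {j : Ordinal} (hj : j < L) : k j < κ := by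
  have hbdd : BddAbove ((fun i => (k i).ord) '' Iio L) := Ordinal.bddAbove_of_small
  rw [← ord_lt_ord, ← hκ]
  exact (ord_lt_ord.2 (hk _ _ (Order.lt_succ j) (hL.succ_lt hj))).trans_le
    (le_csSup hbdd (mem_image_of_mem _ (hL.succ_lt hj)))

theorem stmt_14_general (κ lam : Cardinal) (hlam : lam.IsRegular) (hω : ℵ₀ < lam)
    (hpow : ∀ τ < κ, τ ^ lam < κ)
    (k : Ordinal → Cardinal)
    (hkmono : ∀ i j, i < j → j < lam.ord → k i < k j)
    (hkcof : sSup ((fun i => (k i).ord) '' Set.Iio lam.ord) = κ.ord)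
    (S : Set Ordinal) (hSstat : IsStat S lam.ord)
    (α : Ordinal) (f : Ordinal → Ordinal → Ordinal)
    (hprod : ∀ β < α, ∀ i ∈ S, f β i < (Order.succ (k i)).ord)
    (hinc : ∀ β γ, β < γ → γ < α → ∃ j < lam.ord, ∀ i ∈ S, j ≤ i → f β i < f γ i)
    (F : Ordinal → Set Ordinal)
    (hFot : ∀ i ∈ S, ∃ j < i, ∃ ξ < (k j).ord, HasOtype (F i) ξ) :
    #↥{β | β < α ∧ ∃ j < lam.ord, ∀ i ∈ S, j ≤ i → f β i ∈ F i} < κ ∧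
      ∃ ξ < κ.ord,
        HasOtype {β | β < α ∧ ∃ j < lam.ord, ∀ i ∈ S, j ≤ i → f β i ∈ F i} ξ := by
  have hL : Order.IsSuccLimit lam.ord := isSuccLimit_ord hω.le
  obtain ⟨j₀, hj₀, hT⟩ := hSstat.exists_unbdd_of_forall_exists_lt hlam hω hFot
  have hk : k j₀ + 1 < κ :=
    (add_one_le_of_lt (hkmono _ _ (Order.lt_succ j₀) (hL.succ_lt hj₀))).trans_lt
      (lt_of_sSup_ord_eq hL hkmono hkcof (hL.succ_lt hj₀))
  have hkle : ∀ j ≤ j₀, k j ≤ k j₀ := fun j hj =>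
    hj.eq_or_lt.elim (fun h => h ▸ le_rfl) fun h => (hkmono _ _ h hj₀).le
  have hcard : #↥{β | β < α ∧ ∃ j < lam.ord, ∀ i ∈ S, j ≤ i → f β i ∈ F i} ≤
      (k j₀ + 1) ^ lam := by
    simpa using lift_mk_le_of_eventually_mem hT
      (fun β hβ => hβ.2.imp fun j hj => ⟨hj.1, fun i hi => hj.2 i hi.1⟩)
      (fun β _ γ hγ hβγ =>
        (hinc β γ hβγ hγ.1).imp fun j hj => ⟨hj.1, fun i hi => hj.2 i hi.1⟩)
      (μ := k j₀) fun i ⟨_, _, j, hjj₀, ξ, hξ, hFξ⟩ =>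
        hFξ.mk_le.trans (lift_le.2 ((lt_ord.1 hξ).le.trans (hkle j hjj₀)))
  refine ⟨hcard.trans_lt (hpow _ hk), _, ?_, hasOtype_type _⟩
  rw [lt_ord, Ordinal.card_type]
  exact hcard.trans_lt (hpow _ hk)

/-- the order-type (and cardinality) bound for `C_F`. -/
theorem stmt_14 (κ lam : Cardinal) (hlam : lam.IsRegular) (hω : ℵ₀ < lam)
    (hcof : κ.ord.cof = lam) (hlt : lam < κ)
    (hpow : ∀ τ < κ, τ ^ lam < κ)
    (k : Ordinal → Cardinal)
    (hkmono : ∀ i j, i < j → j < lam.ord → k i < k j)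
    (hkcof : sSup ((fun i => (k i).ord) '' Set.Iio lam.ord) = κ.ord)
    (S : Set Ordinal) (hSsub : S ⊆ Set.Iio lam.ord) (hSstat : IsStat S lam.ord)
    (α : Ordinal) (f : Ordinal → Ordinal → Ordinal)
    (hprod : ∀ β < α, ∀ i ∈ S, f β i < (Order.succ (k i)).ord)
    (hinc : ∀ β γ, β < γ → γ < α → ∃ j < lam.ord, ∀ i ∈ S, j ≤ i → f β i < f γ i)
    (F : Ordinal → Set Ordinal)
    (hFot : ∀ i ∈ S, ∃ j < i, ∃ ξ < (k j).ord, HasOtype (F i) ξ) :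
    #↥{β | β < α ∧ ∃ j < lam.ord, ∀ i ∈ S, j ≤ i → f β i ∈ F i} < κ ∧
      ∃ ξ < κ.ord,
        HasOtype {β | β < α ∧ ∃ j < lam.ord, ∀ i ∈ S, j ≤ i → f β i ∈ F i} ξ :=
  stmt_14_general κ lam hlam hω hpow k hkmono hkcof S hSstat α f hprod hinc F hFot
end

section
/- Partial coherence propagation: Suppose ⟨C_α : α ∈ Σ⟩ is a sequence of closed subsets of ordinals (C_α ⊆ α closed in α) with the property that whenever γ ∈ lim C_α ∩ lim C_β and cf(γ) ≠ μ, then C_α ∩ γ = C_β ∩ γ. Then full coherence holds: whenever γ ∈ lim C_α ∩ lim C_β (regardless of cf(γ)), C_α ∩ γ = C_β ∩ γ, provided that for γ of cofinality μ one can choose a strictly increasing continuous sequence ⟨γ_ξ : ξ < μ⟩ converging to γ with both C_α and C_β meeting every interval (γ_ξ, γ_{ξ+1}), so that each γ_η for limit η is a common limit point of C_α and C_β of cofinality < μ. -/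
open Cardinal Set

/-!
Below `γ` the sets `C α` and `C β` agree as soon as they agree below a cofinal family of
ordinals. For `cf γ = μ` the points `g η`, `η < μ` a limit, form such a family: each is a
common limit point of `C α` and `C β` (both sets meet every interval `(g ξ, g (ξ + 1))`) of
cofinality `< μ`, so the hypothesis gives coherence below it. The limits `ξ + ω` are cofinal
in `μ` because `μ` is uncountable.
-/

open Ordinal

universe u

lemma inter_Iio_eq_of_forall_lt_exists {A B : Set Ordinal} {γ : Ordinal}
    (h : ∀ x < γ, ∃ δ, x < δ ∧ A ∩ Iio δ = B ∩ Iio δ) : A ∩ Iio γ = B ∩ Iio γ := by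
  ext x
  refine ⟨fun ⟨hxA, hxγ⟩ => ?_, fun ⟨hxB, hxγ⟩ => ?_⟩ <;> obtain ⟨δ, hxδ, hδ⟩ := h x hxγ
  · exact ⟨(hδ ▸ ⟨hxA, hxδ⟩ : x ∈ B ∩ Iio δ).1, hxγ⟩
  · exact ⟨(hδ ▸ ⟨hxB, hxδ⟩ : x ∈ A ∩ Iio δ).1, hxγ⟩

lemma isLimPt_sSup_image_of_forall_Ioo_nonempty {D : Set Ordinal.{u}}
    {g : Ordinal.{u} → Ordinal.{u}} {η : Ordinal.{u}} (hη : Order.IsSuccLimit η)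
    (hD : ∀ ξ, ξ + 1 < η → (D ∩ Ioo (g ξ) (g (ξ + 1))).Nonempty) :
    IsLimPt D (sSup (g '' Iio η)) := by
  have hbdd : BddAbove (g '' Iio η) := Ordinal.bddAbove_image bddAbove_Iio g
  have meets_below : ∀ ξ < η, ∃ c ∈ D, g ξ < c ∧ c < sSup (g '' Iio η) := by
    intro ξ hξ
    have hξ1 : ξ + 1 < η := hη.add_one_lt hξ
    obtain ⟨c, hcD, hξc, hc1⟩ := hD ξ hξ1
    exact ⟨c, hcD, hξc, hc1.trans_le (le_csSup hbdd (mem_image_of_mem g hξ1))⟩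
  refine ⟨?_, fun b hb => ?_⟩
  · obtain ⟨c, -, h0c, hc⟩ := meets_below 0 hη.pos
    exact (zero_le.trans_lt h0c).trans hc
  · obtain ⟨_, ⟨ξ, hξ, rfl⟩, hbξ⟩ := exists_lt_of_lt_csSup ⟨g 0, mem_image_of_mem g hη.pos⟩ hb
    obtain ⟨c, hcD, hξc, hc⟩ := meets_below ξ hξ
    exact ⟨c, hcD, hbξ.trans hξc, hc⟩

lemma exists_isSuccLimit_lt_of_lt_sSup_image {o : Ordinal} (ho : IsPrincipal (· + ·) o)
    (hωo : ω < o) {g : Ordinal → Ordinal} (hg : MonotoneOn g (Iio o)) {x : Ordinal}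
    (hx : x < sSup (g '' Iio o)) : ∃ η < o, Order.IsSuccLimit η ∧ x < g η := by
  have hne : (g '' Iio o).Nonempty := Nonempty.image g ⟨0, zero_le.trans_lt hωo⟩
  obtain ⟨_, ⟨ξ, hξ, rfl⟩, hxξ⟩ := exists_lt_of_lt_csSup hne hx
  have hξω : ξ + ω < o := ho hξ hωo
  exact ⟨ξ + ω, hξω, isSuccLimit_add ξ isSuccLimit_omega0,
    hxξ.trans_le (hg hξ hξω le_self_add)⟩

theorem stmt_16_general (μ : Cardinal) (hω : ℵ₀ < μ)
    (Sig : Set Ordinal) (C : Ordinal → Set Ordinal)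
    (hcoh : ∀ α ∈ Sig, ∀ β ∈ Sig, ∀ γ, IsLimPt (C α) γ → IsLimPt (C β) γ →
      γ.cof ≠ μ → C α ∩ Set.Iio γ = C β ∩ Set.Iio γ)
    (hseq : ∀ α ∈ Sig, ∀ β ∈ Sig, ∀ γ, IsLimPt (C α) γ → IsLimPt (C β) γ →
      γ.cof = μ →
      ∃ g : Ordinal → Ordinal, StrictMonoOn g (Set.Iio μ.ord) ∧
        (∀ ξ < μ.ord, Order.IsSuccLimit ξ → g ξ = sSup (g '' Set.Iio ξ)) ∧
        sSup (g '' Set.Iio μ.ord) = γ ∧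
        (∀ ξ, ξ + 1 < μ.ord → (C α ∩ Set.Ioo (g ξ) (g (ξ + 1))).Nonempty ∧
          (C β ∩ Set.Ioo (g ξ) (g (ξ + 1))).Nonempty) ∧
        ∀ η < μ.ord, Order.IsSuccLimit η → (g η).cof < μ) :
    ∀ α ∈ Sig, ∀ β ∈ Sig, ∀ γ, IsLimPt (C α) γ → IsLimPt (C β) γ →
      C α ∩ Set.Iio γ = C β ∩ Set.Iio γ := by
  intro α hα β hβ γ hαγ hβγ
  rcases ne_or_eq γ.cof μ with hcf | hcf
  · exact hcoh α hα β hβ γ hαγ hβγ hcf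
  obtain ⟨g, hmono, hcont, hsup, hmeet, hcof⟩ := hseq α hα β hβ γ hαγ hβγ hcf
  refine inter_Iio_eq_of_forall_lt_exists fun x hx => ?_
  obtain ⟨η, hη, hlim, hxη⟩ := exists_isSuccLimit_lt_of_lt_sSup_image
    (isPrincipal_add_ord hω.le) (omega0_lt_ord.2 hω) hmono.monotoneOn (hsup ▸ hx)
  have isLimPt_g : ∀ D, (∀ ξ, ξ + 1 < μ.ord → (D ∩ Ioo (g ξ) (g (ξ + 1))).Nonempty) →
      IsLimPt D (g η) := fun D hD => hcont η hη hlim ▸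
    isLimPt_sSup_image_of_forall_Ioo_nonempty hlim fun ξ hξ => hD ξ (hξ.trans hη)
  exact ⟨g η, hxη, hcoh α hα β hβ (g η) (isLimPt_g _ fun ξ hξ => (hmeet ξ hξ).1)
    (isLimPt_g _ fun ξ hξ => (hmeet ξ hξ).2) (hcof η hη hlim).ne⟩

/-- coherence at limit points of cofinality `≠ μ` propagates to full coherence. -/
theorem stmt_16 (μ : Cardinal) (hμ : μ.IsRegular) (hω : ℵ₀ < μ)
    (Sig : Set Ordinal) (C : Ordinal → Set Ordinal)
    (hsub : ∀ α ∈ Sig, C α ⊆ Set.Iio α)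
    (hclosed : ∀ α ∈ Sig, ∀ γ < α, IsLimPt (C α) γ → γ ∈ C α)
    (hcoh : ∀ α ∈ Sig, ∀ β ∈ Sig, ∀ γ, IsLimPt (C α) γ → IsLimPt (C β) γ →
      γ.cof ≠ μ → C α ∩ Set.Iio γ = C β ∩ Set.Iio γ)
    (hseq : ∀ α ∈ Sig, ∀ β ∈ Sig, ∀ γ, IsLimPt (C α) γ → IsLimPt (C β) γ →
      γ.cof = μ →
      ∃ g : Ordinal → Ordinal, StrictMonoOn g (Set.Iio μ.ord) ∧
        (∀ ξ < μ.ord, Order.IsSuccLimit ξ → g ξ = sSup (g '' Set.Iio ξ)) ∧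
        sSup (g '' Set.Iio μ.ord) = γ ∧
        (∀ ξ, ξ + 1 < μ.ord → (C α ∩ Set.Ioo (g ξ) (g (ξ + 1))).Nonempty ∧
          (C β ∩ Set.Ioo (g ξ) (g (ξ + 1))).Nonempty) ∧
        ∀ η < μ.ord, Order.IsSuccLimit η → (g η).cof < μ) :
    ∀ α ∈ Sig, ∀ β ∈ Sig, ∀ γ, IsLimPt (C α) γ → IsLimPt (C β) γ →
      C α ∩ Set.Iio γ = C β ∩ Set.Iio γ :=
  stmt_16_general μ hω Sig C hcoh hseq
end

section
/- Distributivity transfer: If τ is a regular cardinal, ℙ is a forcing poset of size ≤ τ, and ℚ is a τ⁺-distributive forcing poset, then ℙ forces that ℚ (i.e., its image in the extension) is τ⁺-distributive. -/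
/-!
A `P`-name for a dense open subset of `Q` is reflected in the ground model by the sets
`{r | some p'' ≤ p' forces r into the name}`, one for each `p' ∈ P`; each of them is dense
open in `Q`. As `|P| ≤ τ`, a family of `τ` names yields only `τ · τ = τ` such sets, so by the
distributivity of `Q` in the ground model below any `q` there is a `q'` lying in all of them.
Then every `p' ≤ p` has an extension forcing `q'` into each name, hence `p` forces it.
-/

open Cardinal Set

universe u

section

variable {P Q : Type*} [Preorder P] [Preorder Q]

/-- The conditions of `Q` that some strengthening of `p` forces into the name described by `R`. -/
def forcedBelow (R : P → Set Q) (p : P) : Set Q := {r | ∃ p' ≤ p, r ∈ R p'}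

lemma exists_le_mem_forcedBelow {R : P → Set Q}
    (hdense : ∀ (p : P) (q : Q), ∃ p' ≤ p, ∃ q' ≤ q, q' ∈ R p') (p : P) (q : Q) :
    ∃ q' ≤ q, q' ∈ forcedBelow R p := by
  obtain ⟨p', hp', q', hq', hmem⟩ := hdense p q
  exact ⟨q', hq', p', hp', hmem⟩

lemma mem_forcedBelow_of_le {R : P → Set Q}
    (hopen : ∀ (p : P), ∀ q ∈ R p, ∀ q' ≤ q, q' ∈ R p) (p : P) :
    ∀ q ∈ forcedBelow R p, ∀ q' ≤ q, q' ∈ forcedBelow R p := by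
  rintro q ⟨p', hp', hmem⟩ q' hq'
  exact ⟨p', hp', hopen p' q hmem q' hq'⟩

end

theorem stmt_18_general {P Q : Type u} [Preorder P] [Preorder Q] (τ : Cardinal.{u})
    (hτ : τ.IsRegular) (hP : #P ≤ τ)
    (hQdistrib : ∀ (ι : Type u) (D : ι → Set Q), #ι ≤ τ →
      (∀ i, (∀ q, ∃ q' ≤ q, q' ∈ D i) ∧ (∀ q ∈ D i, ∀ q' ≤ q, q' ∈ D i)) →
      ∀ q, ∃ q' ≤ q, ∀ i, q' ∈ D i)
    (ι : Type u) (hι : #ι ≤ τ) (R : ι → P → Set Q)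
    (hopen : ∀ i (p : P), ∀ q ∈ R i p, ∀ q' ≤ q, q' ∈ R i p)
    (hdense : ∀ i (p : P) (q : Q), ∃ p' ≤ p, ∃ q' ≤ q, q' ∈ R i p')
    (hforced : ∀ i (p : P) (q : Q),
      (∀ p' ≤ p, ∃ p'' ≤ p', q ∈ R i p'') → q ∈ R i p) :
    ∀ (p : P) (q : Q), ∃ q' ≤ q, ∀ i, q' ∈ R i p := by
  intro p q
  have hcard : #(ι × P) ≤ τ := by
    simpa only [mk_prod, lift_id] using mul_le_of_le hτ.aleph0_le hι hP
  obtain ⟨q', hq', hall⟩ := hQdistrib (ι × P) (fun ip => forcedBelow (R ip.1) ip.2) hcard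
    (fun ip => ⟨exists_le_mem_forcedBelow (hdense ip.1) ip.2,
      mem_forcedBelow_of_le (hopen ip.1) ip.2⟩) q
  exact ⟨q', hq', fun i => hforced i p q' fun p' _ => hall (i, p')⟩

/-- if `|P| ≤ τ` and `Q` is `τ⁺`-distributive, then `P` forces `Q` to be
`τ⁺`-distributive.  Here `R i p` is the set of `q` such that `p` forces `q` to belong
to the `P`-name for the `i`-th dense open subset of `Q` in the extension. -/
theorem stmt_18 {P Q : Type u} [Preorder P] [Preorder Q] (τ : Cardinal.{u})
    (hτ : τ.IsRegular) (hP : #P ≤ τ)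
    (hQdistrib : ∀ (ι : Type u) (D : ι → Set Q), #ι ≤ τ →
      (∀ i, (∀ q, ∃ q' ≤ q, q' ∈ D i) ∧ (∀ q ∈ D i, ∀ q' ≤ q, q' ∈ D i)) →
      ∀ q, ∃ q' ≤ q, ∀ i, q' ∈ D i)
    (ι : Type u) (hι : #ι ≤ τ) (R : ι → P → Set Q)
    (hmono : ∀ i (p p' : P), p' ≤ p → ∀ q, q ∈ R i p → q ∈ R i p')
    (hopen : ∀ i (p : P), ∀ q ∈ R i p, ∀ q' ≤ q, q' ∈ R i p)
    (hdense : ∀ i (p : P) (q : Q), ∃ p' ≤ p, ∃ q' ≤ q, q' ∈ R i p')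
    (hforced : ∀ i (p : P) (q : Q),
      (∀ p' ≤ p, ∃ p'' ≤ p', q ∈ R i p'') → q ∈ R i p) :
    ∀ (p : P) (q : Q), ∃ q' ≤ q, ∀ i, q' ∈ R i p :=
  stmt_18_general τ hτ hP hQdistrib ι hι R hopen hdense hforced
end
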